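/- arXiv:1312.6238 — 9 statements merged into one kernel-verified Lean document; each statement's English description precedes it below -/
import Mathlib

section
/- Let G be a finite group and O a conjugacy class in G. Then O is of type D as a rack if and only if there exist r, s ∈ O such that the conjugacy classes of r and s in the subgroup ⟨r, s⟩ are distinct and (rs)² ≠ (sr)². -/
/-! Forward: for a finite set `R`, every `g` with `g R g⁻¹ ⊆ R` normalizes `R`, so the normalizer
of `R` contains `r` and `s`, hence all of `⟨r, s⟩`; an element of `⟨r, s⟩` conjugating `r` to `s`
would then carry `r ∈ R` into the disjoint set `S`. Backward: the `⟨r, s⟩`-conjugacy classes of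
`r` and `s` form a decomposable subrack of the class of `x`, since each lies inside `⟨r, s⟩`. -/

/-- A subset of a group is a subrack if it is closed under conjugation `x ▷ y = x y x⁻¹`. -/
def IsSubrack {G : Type*} [Group G] (R : Set G) : Prop :=
  ∀ x ∈ R, ∀ y ∈ R, x * y * x⁻¹ ∈ R

/-- A subset `O` of a group (with the conjugation rack structure) is of type D if it
contains a decomposable subrack `R ⊔ S` together with `r ∈ R`, `s ∈ S` such that
`r ▷ (s ▷ (r ▷ s)) ≠ s`. -/
def IsTypeD {G : Type*} [Group G] (O : Set G) : Prop :=
  ∃ R S : Set G, R ⊆ O ∧ S ⊆ O ∧ Disjoint R S ∧ IsSubrack R ∧ IsSubrack S ∧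
    (∀ r ∈ R, ∀ s ∈ S, r * s * r⁻¹ ∈ S) ∧ (∀ s ∈ S, ∀ r ∈ R, s * r * s⁻¹ ∈ R) ∧
    ∃ r ∈ R, ∃ s ∈ S, r * (s * (r * s * r⁻¹) * s⁻¹) * r⁻¹ ≠ s

section

variable {G : Type*} [Group G]

theorem conj_conj_conj_eq_iff_sq_eq (r s : G) :
    r * (s * (r * s * r⁻¹) * s⁻¹) * r⁻¹ = s ↔ (r * s) ^ 2 = (s * r) ^ 2 := by
  rw [sq, sq, show r * (s * (r * s * r⁻¹) * s⁻¹) * r⁻¹ = r * s * (r * s) * (r * s * r)⁻¹ by group,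
    mul_inv_eq_iff_eq_mul, show s * (r * s * r) = s * r * (s * r) by group]

namespace Subgroup

theorem mem_normalizer_of_forall_conj_mem {R : Set G} (hR : R.Finite) {g : G}
    (h : ∀ y ∈ R, g * y * g⁻¹ ∈ R) : g ∈ normalizer R := by
  intro y
  refine ⟨h y, fun hy => ?_⟩
  obtain ⟨z, hz, hzy⟩ := ((hR.injOn_iff_bijOn_of_mapsTo h).mp conj_injective.injOn).surjOn hy
  rwa [← conj_injective hzy]

variable (H : Subgroup G)

def conjClassBy (a : G) : Set G := {y | ∃ k ∈ H, k * a * k⁻¹ = y}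

variable {H}

theorem mem_conjClassBy_self (a : G) : a ∈ H.conjClassBy a :=
  ⟨1, H.one_mem, by group⟩

theorem conjClassBy_subset_setOf_isConj {x a : G} (ha : IsConj x a) :
    H.conjClassBy a ⊆ {y | IsConj x y} := by
  rintro y ⟨k, -, rfl⟩
  exact ha.trans (isConj_iff.mpr ⟨k, rfl⟩)

theorem conjClassBy_subset {a : G} (ha : a ∈ H) : H.conjClassBy a ⊆ H := by
  rintro y ⟨k, hk, rfl⟩
  exact mul_mem (mul_mem hk ha) (inv_mem hk)

theorem conj_mem_conjClassBy {a g y : G} (hg : g ∈ H) (hy : y ∈ H.conjClassBy a) :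
    g * y * g⁻¹ ∈ H.conjClassBy a := by
  obtain ⟨k, hk, rfl⟩ := hy
  exact ⟨g * k, mul_mem hg hk, by group⟩

theorem isSubrack_conjClassBy {a : G} (ha : a ∈ H) : IsSubrack (H.conjClassBy a) :=
  fun _ hx _ hy => conj_mem_conjClassBy (conjClassBy_subset ha hx) hy

theorem disjoint_conjClassBy {a b : G} (h : ¬ ∃ k ∈ H, k * a * k⁻¹ = b) :
    Disjoint (H.conjClassBy a) (H.conjClassBy b) := by
  refine Set.disjoint_left.mpr ?_
  rintro _ ⟨k, hk, rfl⟩ ⟨k', hk', hk'k⟩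
  refine h ⟨k'⁻¹ * k, mul_mem (inv_mem hk') hk, ?_⟩
  rw [show k'⁻¹ * k * a * (k'⁻¹ * k)⁻¹ = k'⁻¹ * (k * a * k⁻¹) * k' by group, ← hk'k]
  group

end Subgroup

end

/-- A conjugacy class `O` of a finite group `G` is of type D as a rack if and only if
there exist `r, s ∈ O` whose conjugacy classes in the subgroup `⟨r, s⟩` are distinct
and such that `(rs)² ≠ (sr)²`. -/
theorem stmt2 {G : Type*} [Group G] [Fintype G] (x : G) :
    IsTypeD {y : G | IsConj x y} ↔
      ∃ r ∈ {y : G | IsConj x y}, ∃ s ∈ {y : G | IsConj x y},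
        (¬ ∃ k ∈ Subgroup.closure {r, s}, k * r * k⁻¹ = s) ∧
        (r * s) ^ 2 ≠ (s * r) ^ 2 := by
  constructor
  · rintro ⟨R, S, hRO, hSO, hRS, hR, -, -, hSR, r, hr, s, hs, hrs⟩
    refine ⟨r, hRO hr, s, hSO hs, ?_, (conj_conj_conj_eq_iff_sq_eq r s).not.mp hrs⟩
    have hle : Subgroup.closure {r, s} ≤ Subgroup.normalizer R := by
      rw [Subgroup.closure_le, Set.insert_subset_iff, Set.singleton_subset_iff]
      exact ⟨Subgroup.mem_normalizer_of_forall_conj_mem R.toFinite (hR r hr),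
        Subgroup.mem_normalizer_of_forall_conj_mem R.toFinite (hSR s hs)⟩
    rintro ⟨k, hk, rfl⟩
    exact hRS.notMem_of_mem_left (((hle hk) r).mp hr) hs
  · rintro ⟨r, hr, s, hs, hrs, hsq⟩
    have hrH : r ∈ Subgroup.closure {r, s} := Subgroup.subset_closure (by simp)
    have hsH : s ∈ Subgroup.closure {r, s} := Subgroup.subset_closure (by simp)
    exact ⟨_, _, Subgroup.conjClassBy_subset_setOf_isConj hr,
      Subgroup.conjClassBy_subset_setOf_isConj hs, Subgroup.disjoint_conjClassBy hrs,
      Subgroup.isSubrack_conjClassBy hrH, Subgroup.isSubrack_conjClassBy hsH,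
      fun _ hr' _ hs' => Subgroup.conj_mem_conjClassBy (Subgroup.conjClassBy_subset hrH hr') hs',
      fun _ hs' _ hr' => Subgroup.conj_mem_conjClassBy (Subgroup.conjClassBy_subset hsH hs') hr',
      r, Subgroup.mem_conjClassBy_self r, s, Subgroup.mem_conjClassBy_self s,
      (conj_conj_conj_eq_iff_sq_eq r s).not.mpr hsq⟩
end

section
/- Let G be a finite group and O a conjugacy class in G. Then O is of type F if and only if there exist r₁, r₂, r₃, r₄ ∈ O such that the conjugacy classes of the rₐ in the subgroup K = ⟨r₁, r₂, r₃, r₄⟩ are pairwise distinct and rₐ r_b ≠ r_b rₐ for all a ≠ b. -/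
/-- A subset `O` of a group (with the conjugation rack structure) is of type F if it
has four subracks `R₁, R₂, R₃, R₄`, pairwise disjoint, with `Rₐ ▷ R_b = R_b` for
`a ≠ b`, together with elements `rₐ ∈ Rₐ` with `rₐ ▷ r_b ≠ r_b` for `a ≠ b`. -/
def IsTypeF {G : Type*} [Group G] (O : Set G) : Prop :=
  ∃ R : Fin 4 → Set G, (∀ a, R a ⊆ O) ∧ (∀ a, IsSubrack (R a)) ∧
    (∀ a b, a ≠ b → Disjoint (R a) (R b)) ∧
    (∀ a b, a ≠ b → {z | ∃ r ∈ R a, ∃ s ∈ R b, z = r * s * r⁻¹} = R b) ∧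
    ∃ r : Fin 4 → G, (∀ a, r a ∈ R a) ∧
      ∀ a b, a ≠ b → r a * r b * (r a)⁻¹ ≠ r b

section

variable {G : Type*} [Group G]

theorem mem_normalizer_of_conj_mapsTo [Finite G] {S : Set G} {g : G}
    (h : Set.MapsTo (fun s => g * s * g⁻¹) S S) : g ∈ Subgroup.normalizer S := by
  have hinj : Function.Injective (fun s => g * s * g⁻¹) := fun u v huv => by simpa using huv
  have hsurj := ((S.toFinite.injOn_iff_bijOn_of_mapsTo h).mp hinj.injOn).surjOn
  refine fun n => ⟨fun hn => h hn, fun hn => ?_⟩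
  obtain ⟨s, hs, hsn⟩ := hsurj hn
  exact hinj hsn ▸ hs

theorem IsTypeF.exists_nonconj_noncommuting [Finite G] {O : Set G} (hO : IsTypeF O) :
    ∃ r : Fin 4 → G, (∀ a, r a ∈ O) ∧
      (∀ a b, a ≠ b → ¬ ∃ k ∈ Subgroup.closure (Set.range r), k * r a * k⁻¹ = r b) ∧
      ∀ a b, a ≠ b → r a * r b ≠ r b * r a := by
  obtain ⟨R, hRO, hSub, hDisj, hConj, r, hr, hne⟩ := hO
  have hnormal : ∀ a, Subgroup.closure (Set.range r) ≤ Subgroup.normalizer (R a) := by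
    intro a
    rw [Subgroup.closure_le]
    rintro _ ⟨c, rfl⟩
    refine mem_normalizer_of_conj_mapsTo fun s hs => ?_
    by_cases hca : c = a
    · subst hca
      exact hSub c (r c) (hr c) s hs
    · rw [← hConj c a hca]
      exact ⟨r c, hr c, s, hs, rfl⟩
  refine ⟨r, fun a => hRO a (hr a), ?_, fun a b hab h => hne a b hab ?_⟩
  · rintro a b hab ⟨k, hk, hkr⟩
    have hrb : r b ∈ R a := hkr ▸ (hnormal a hk (r a)).mp (hr a)
    exact Set.disjoint_left.mp (hDisj a b hab) hrb (hr b)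
  · rw [h, mul_inv_cancel_right]

def conjClassIn (K : Subgroup G) (g : G) : Set G :=
  {z | ∃ k ∈ K, k * g * k⁻¹ = z}

section conjClassIn

variable {K : Subgroup G} {g h : G}

theorem self_mem_conjClassIn : g ∈ conjClassIn K g :=
  ⟨1, K.one_mem, by group⟩

theorem conj_mem_conjClassIn {k z : G} (hk : k ∈ K) (hz : z ∈ conjClassIn K g) :
    k * z * k⁻¹ ∈ conjClassIn K g := by
  obtain ⟨k', hk', rfl⟩ := hz
  exact ⟨k * k', K.mul_mem hk hk', by group⟩

theorem conjClassIn_subset (hg : g ∈ K) : conjClassIn K g ⊆ K := by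
  rintro _ ⟨k, hk, rfl⟩
  exact K.mul_mem (K.mul_mem hk hg) (K.inv_mem hk)

theorem isSubrack_conjClassIn (hg : g ∈ K) : IsSubrack (conjClassIn K g) :=
  fun _ hx _ hy => conj_mem_conjClassIn (conjClassIn_subset hg hx) hy

theorem disjoint_conjClassIn (h_not_conj : ¬ ∃ k ∈ K, k * g * k⁻¹ = h) :
    Disjoint (conjClassIn K g) (conjClassIn K h) := by
  rw [Set.disjoint_left]
  rintro _ ⟨k, hk, rfl⟩ ⟨k', hk', heq⟩
  refine h_not_conj ⟨k'⁻¹ * k, K.mul_mem (K.inv_mem hk') hk, ?_⟩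
  calc k'⁻¹ * k * g * (k'⁻¹ * k)⁻¹ = k'⁻¹ * (k * g * k⁻¹) * k' := by group
    _ = h := by rw [← heq]; group

theorem conj_image_conjClassIn (hg : g ∈ K) :
    {z | ∃ r ∈ conjClassIn K g, ∃ s ∈ conjClassIn K h, z = r * s * r⁻¹} = conjClassIn K h := by
  ext z
  constructor
  · rintro ⟨r, hr, s, hs, rfl⟩
    exact conj_mem_conjClassIn (conjClassIn_subset hg hr) hs
  · intro hz
    refine ⟨g, self_mem_conjClassIn, g⁻¹ * z * g⁻¹⁻¹,
      conj_mem_conjClassIn (K.inv_mem hg) hz, by group⟩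

end conjClassIn

theorem isTypeF_of_nonconj_noncommuting {O : Set G}
    (hO : ∀ y ∈ O, ∀ k : G, k * y * k⁻¹ ∈ O) (r : Fin 4 → G) (hr : ∀ a, r a ∈ O)
    (hcls : ∀ a b, a ≠ b → ¬ ∃ k ∈ Subgroup.closure (Set.range r), k * r a * k⁻¹ = r b)
    (hcomm : ∀ a b, a ≠ b → r a * r b ≠ r b * r a) : IsTypeF O := by
  set K := Subgroup.closure (Set.range r)
  have hrK : ∀ a, r a ∈ K := fun a => Subgroup.subset_closure ⟨a, rfl⟩
  refine ⟨fun a => conjClassIn K (r a), ?_, fun a => isSubrack_conjClassIn (hrK a),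
    fun a b hab => disjoint_conjClassIn (hcls a b hab),
    fun a _ _ => conj_image_conjClassIn (hrK a), r, fun a => self_mem_conjClassIn,
    fun a b hab h => hcomm a b hab (mul_inv_eq_iff_eq_mul.mp h)⟩
  rintro a _ ⟨k, -, rfl⟩
  exact hO _ (hr a) k

end

/-- A conjugacy class `O` of a finite group `G` is of type F as a rack if and only if
there exist `r₁, r₂, r₃, r₄ ∈ O` whose conjugacy classes in the subgroup
`K = ⟨r₁, r₂, r₃, r₄⟩` are pairwise distinct and which pairwise do not commute. -/
theorem stmt3 {G : Type*} [Group G] [Fintype G] (x : G) :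
    IsTypeF {y : G | IsConj x y} ↔
      ∃ r : Fin 4 → G, (∀ a, r a ∈ {y : G | IsConj x y}) ∧
        (∀ a b, a ≠ b →
          ¬ ∃ k ∈ Subgroup.closure (Set.range r), k * r a * k⁻¹ = r b) ∧
        ∀ a b, a ≠ b → r a * r b ≠ r b * r a := by
  refine ⟨IsTypeF.exists_nonconj_noncommuting, fun ⟨r, hr, hcls, hcomm⟩ => ?_⟩
  exact isTypeF_of_nonconj_noncommuting
    (fun y hy k => hy.trans (isConj_iff.mpr ⟨k, rfl⟩)) r hr hcls hcomm
end

section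
/- For n odd, the rack of involutions (reflections) in the dihedral group D_n of order 2n is sober: every subrack of it is either abelian or indecomposable. -/
/-- A subrack is abelian when conjugation acts trivially on it. -/
def IsAbelianRack {G : Type*} [Group G] (X : Set G) : Prop :=
  ∀ x ∈ X, ∀ y ∈ X, x * y * x⁻¹ = y

/-- A subrack is indecomposable when it is not the disjoint union of two
nonempty subracks. -/
def IsIndecomposableRack {G : Type*} [Group G] (X : Set G) : Prop :=
  ¬ ∃ A B : Set G, A.Nonempty ∧ B.Nonempty ∧ Disjoint A B ∧ A ∪ B = X ∧
      IsSubrack A ∧ IsSubrack B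

open Function DihedralGroup

section TakasakiClosed

variable {M : Type*} [AddCommGroup M]

def IsTakasakiClosed (T : Set M) : Prop :=
  ∀ x ∈ T, ∀ y ∈ T, 2 • x - y ∈ T

lemma isTakasakiClosed_univ : IsTakasakiClosed (Set.univ : Set M) :=
  fun _ _ _ _ => Set.mem_univ _

lemma IsTakasakiClosed.preimage_add_right {T : Set M} (hT : IsTakasakiClosed T) (a : M) :
    IsTakasakiClosed ((· + a) ⁻¹' T) := by
  intro x hx y hy
  have h := hT _ hx _ hy
  simp only [Set.mem_preimage] at h ⊢
  convert h using 1
  abel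

lemma two_nsmul_injective_of_odd_card (hM : Odd (Nat.card M)) :
    Injective (fun x : M => 2 • x) :=
  (Nat.Coprime.nsmul_right_bijective (Nat.coprime_two_right.mpr hM)).injective

lemma IsTakasakiClosed.exists_addSubgroup_coe_eq (hM : Odd (Nat.card M)) {T : Set M}
    (hT : IsTakasakiClosed T) (h0 : (0 : M) ∈ T) :
    ∃ H : AddSubgroup M, (H : Set M) = T := by
  have : Finite M := Nat.finite_of_card_ne_zero hM.pos.ne'
  have neg_mem : ∀ y ∈ T, -y ∈ T := fun y hy => by simpa using hT 0 h0 y hy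
  have halve : ∀ x ∈ T, ∃ u ∈ T, 2 • u = x := by
    intro x hx
    let double : T → T := fun t => ⟨2 • (t : M), by simpa using hT t t.2 0 h0⟩
    have hinj : Injective double := fun s t hst =>
      Subtype.ext (two_nsmul_injective_of_odd_card hM (congrArg Subtype.val hst))
    obtain ⟨u, hu⟩ := (Finite.injective_iff_surjective.mp hinj) ⟨x, hx⟩
    exact ⟨u, u.2, congrArg Subtype.val hu⟩
  have add_mem : ∀ x ∈ T, ∀ y ∈ T, x + y ∈ T := by
    intro x hx y hy
    obtain ⟨u, hu, rfl⟩ := halve x hx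
    -- `2 • u + y = 2 • u - (-y)`
    simpa using hT u hu (-y) (neg_mem y hy)
  exact ⟨{ carrier := T, zero_mem' := h0, add_mem' := fun ha hb => add_mem _ ha _ hb,
           neg_mem' := fun ha => neg_mem _ ha }, rfl⟩

lemma IsTakasakiClosed.ncard_dvd_ncard (hM : Odd (Nat.card M)) {S T : Set M}
    (hS : IsTakasakiClosed S) (hT : IsTakasakiClosed T) (hST : S ⊆ T) (hS0 : S.Nonempty) :
    S.ncard ∣ T.ncard := by
  obtain ⟨a, ha⟩ := hS0
  obtain ⟨HS, hHS⟩ := (hS.preimage_add_right a).exists_addSubgroup_coe_eq hM (by simpa using ha)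
  obtain ⟨HT, hHT⟩ :=
    (hT.preimage_add_right a).exists_addSubgroup_coe_eq hM (by simpa using hST ha)
  have hle : HS ≤ HT := by
    intro x hx
    rw [← SetLike.mem_coe, hHT]
    exact hST (by rwa [← SetLike.mem_coe, hHS] at hx)
  have ncard_eq : ∀ (U : Set M) (H : AddSubgroup M), (H : Set M) = (· + a) ⁻¹' U →
      Nat.card H = U.ncard := by
    intro U H hH
    rw [← Set.ncard_preimage_of_injective_subset_range (add_left_injective a)
      (fun x _ => add_right_surjective a x), ← hH]
    exact Nat.card_coe_set_eq (H : Set M)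
  rw [← ncard_eq S HS hHS, ← ncard_eq T HT hHT]
  exact AddSubgroup.card_dvd_of_le hle

lemma IsTakasakiClosed.odd_ncard (hM : Odd (Nat.card M)) {T : Set M}
    (hT : IsTakasakiClosed T) (hT0 : T.Nonempty) : Odd T.ncard := by
  have hdvd := hT.ncard_dvd_ncard hM isTakasakiClosed_univ (Set.subset_univ T) hT0
  rw [Set.ncard_univ] at hdvd
  exact hM.of_dvd_nat hdvd

lemma not_isTakasakiClosed_union (hM : Odd (Nat.card M)) {A B : Set M}
    (hA : IsTakasakiClosed A) (hB : IsTakasakiClosed B) (hA0 : A.Nonempty) (hB0 : B.Nonempty)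
    (hAB : Disjoint A B) : ¬ IsTakasakiClosed (A ∪ B) := by
  intro hT
  have : Finite M := Nat.finite_of_card_ne_zero hM.pos.ne'
  have hcard : (A ∪ B).ncard = A.ncard + B.ncard := Set.ncard_union_eq hAB
  have hdvdA := hA.ncard_dvd_ncard hM hT Set.subset_union_left hA0
  have hdvdB := hB.ncard_dvd_ncard hM hT Set.subset_union_right hB0
  rw [hcard] at hdvdA hdvdB
  have heq : A.ncard = B.ncard :=
    Nat.dvd_antisymm ((Nat.dvd_add_right dvd_rfl).mp hdvdA) ((Nat.dvd_add_left dvd_rfl).mp hdvdB)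
  have hodd := hT.odd_ncard hM (hA0.mono Set.subset_union_left)
  rw [hcard, heq] at hodd
  exact Nat.not_odd_iff_even.mpr ⟨_, rfl⟩ hodd

end TakasakiClosed

namespace DihedralGroup

variable {n : ℕ}

lemma sr_mul_sr_mul_inv (i j : ZMod n) : sr i * sr j * (sr i)⁻¹ = sr (2 • i - j) := by
  rw [inv_sr, sr_mul_sr, r_mul_sr, two_nsmul]
  congr 1
  ring

lemma exists_eq_sr_of_orderOf_eq_two (hn : Odd n) {x : DihedralGroup n} (hx : orderOf x = 2) :
    ∃ i, x = sr i := by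
  cases x with
  | sr i => exact ⟨i, rfl⟩
  | r i =>
    have hpow : r i ^ n = 1 := by rw [r_pow, ZMod.natCast_self, mul_zero, r_zero]
    have h2n : 2 ∣ n := hx ▸ orderOf_dvd_of_pow_eq_one hpow
    exact absurd (even_iff_two_dvd.mpr h2n) (Nat.not_even_iff_odd.mpr hn)

end DihedralGroup

lemma IsSubrack.isTakasakiClosed_preimage_sr {n : ℕ} {X : Set (DihedralGroup n)}
    (hX : IsSubrack X) : IsTakasakiClosed (sr ⁻¹' X) := by
  intro i hi j hj
  simpa only [Set.mem_preimage, sr_mul_sr_mul_inv] using hX _ hi _ hj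

/-- For `n` odd, the rack of involutions of the dihedral group `D_n` of order `2n`
is sober: every subrack of it is either abelian or indecomposable. -/
theorem stmt5 (n : ℕ) (hn : Odd n) (X : Set (DihedralGroup n))
    (hXinv : ∀ x ∈ X, orderOf x = 2) (hX : IsSubrack X) :
    IsAbelianRack X ∨ IsIndecomposableRack X := by
  right
  rintro ⟨A, B, ⟨a, ha⟩, ⟨b, hb⟩, hAB, rfl, hA, hB⟩
  have hM : Odd (Nat.card (ZMod n)) := by rwa [Nat.card_zmod]
  obtain ⟨i, rfl⟩ := exists_eq_sr_of_orderOf_eq_two hn (hXinv _ (Or.inl ha))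
  obtain ⟨j, rfl⟩ := exists_eq_sr_of_orderOf_eq_two hn (hXinv _ (Or.inr hb))
  refine not_isTakasakiClosed_union hM hA.isTakasakiClosed_preimage_sr
    hB.isTakasakiClosed_preimage_sr ⟨i, ha⟩ ⟨j, hb⟩ (hAB.preimage sr) ?_
  rw [← Set.preimage_union]
  exact hX.isTakasakiClosed_preimage_sr
end

section
/- Let q be a prime power, n ≥ 2, and for a ∈ F_q^× let r_a ∈ SL_n(q) be the upper-triangular unipotent matrix with 1's on the diagonal, entries a, 1, 1, …, 1 on the superdiagonal, and 0 elsewhere. Then r_a and r_b are conjugate in SL_n(q) if and only if b = θⁿ a for some θ ∈ F_q^×. Consequently the number of regular unipotent conjugacy classes in SL_n(q) equals gcd(n, q−1). -/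
/-!
Let `N = r₁ - 1` be the nilpotent shift and `D_c = diag(c, 1, …, 1)`, so that
`D_c r_a = r_{ca} D_c`. A matrix commuting with `N` is upper triangular with constant diagonal,
so its determinant is an `n`-th power. If `C r_a = r_b C`, then `D_{b⁻¹} C D_a` commutes with `N`
and has determinant `(det C) a / b`; conversely `θ⁻¹ D_{θⁿ}` conjugates `r_a` to `r_{θⁿ a}`.

If `(M - 1)ⁿ = 0 ≠ (M - 1)ⁿ⁻¹`, a vector `v` with `(M - 1)ⁿ⁻¹ v ≠ 0` is cyclic, and the basis
`(M - 1)ⁿ⁻¹ v, …, (M - 1) v, v` gives `P` with `M P = P r₁`; then `P D_{1/det P}` lies in `SL_n`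
and conjugates `M` to `r_{det P}`. Hence the regular unipotent classes are the classes of the
`r_a`, in bijection with `F^× / (F^×)ⁿ`, which has order `gcd(n, q - 1)` as `F^×` is cyclic.
-/

/-- The unipotent upper bidiagonal matrix `r_a` with `1`s on the diagonal and
superdiagonal `(a, 1, 1, …, 1)`. -/
def rMat {F : Type*} [Field F] (n : ℕ) (a : F) : Matrix (Fin n) (Fin n) F :=
  fun i j =>
    if (j : ℕ) = (i : ℕ) then 1
    else if (j : ℕ) = (i : ℕ) + 1 then (if (i : ℕ) = 0 then a else 1)
    else 0

open Matrix

lemma linearIndependent_pow_apply {K V : Type*} [Field K] [AddCommGroup V] [Module K V]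
    (f : Module.End K V) {v : V} {n : ℕ} (hn : (f ^ n) v = 0) (hv : (f ^ (n - 1)) v ≠ 0) :
    LinearIndependent K fun i : Fin n => (f ^ (i : ℕ)) v := by
  have vanish : ∀ k, n ≤ k → (f ^ k) v = 0 := fun k hk => by
    rw [← Nat.sub_add_cancel hk, pow_add, Module.End.mul_apply, hn, map_zero]
  rw [Fintype.linearIndependent_iff]
  intro g hg i
  induction i using WellFoundedLT.induction with
  | _ i ih =>
    -- `f ^ (n - 1 - i)` kills the terms of index `> i`; those of index `< i` vanish by induction.
    have hsum := congrArg (f ^ (n - 1 - i)) hg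
    simp only [map_sum, map_zero, map_smul, ← Module.End.mul_apply, ← pow_add] at hsum
    rw [Finset.sum_eq_single i, Nat.sub_add_cancel (by omega)] at hsum
    · exact (smul_eq_zero.mp hsum).resolve_right hv
    · intro j _ hj
      rcases lt_or_gt_of_ne hj with hlt | hgt
      · rw [ih j hlt, zero_smul]
      · rw [vanish _ (by omega), smul_zero]
    · simp

lemma Matrix.SpecialLinearGroup.isConj_iff {ι R : Type*} [Fintype ι] [DecidableEq ι]
    [CommRing R] {g h : SpecialLinearGroup ι R} :
    IsConj g h ↔ ∃ C : Matrix ι ι R, C.det = 1 ∧ C * g = h * C := by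
  constructor
  · rintro ⟨c, hc⟩
    exact ⟨(c : SpecialLinearGroup ι R), SpecialLinearGroup.det_coe _, congrArg Subtype.val hc⟩
  · rintro ⟨C, hC, hCg⟩
    exact ⟨toUnits ⟨C, hC⟩, Subtype.ext hCg⟩

lemma card_range_eq_index_of_eq_iff {G β : Type*} [Group G] (H : Subgroup G) (φ : G → β)
    (hφ : ∀ a b, φ a = φ b ↔ a⁻¹ * b ∈ H) : Nat.card (Set.range φ) = H.index := by
  have hker : Setoid.ker φ = QuotientGroup.leftRel H :=
    Setoid.ext fun a b => Setoid.ker_def.trans ((hφ a b).trans QuotientGroup.leftRel_apply.symm)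
  rw [Subgroup.index, ← Nat.card_congr (Setoid.quotientKerEquivRange φ), hker]
  rfl

section

variable {F : Type*} [Field F] {n : ℕ}

def shiftMatrix (n : ℕ) : Matrix (Fin n) (Fin n) F :=
  of fun i j => if (j : ℕ) = i + 1 then 1 else 0

def headDiagonal (n : ℕ) (c : F) : Matrix (Fin n) (Fin n) F :=
  diagonal fun i => if (i : ℕ) = 0 then c else 1

lemma one_add_shiftMatrix : 1 + shiftMatrix n = rMat n (1 : F) := by
  ext i j
  simp only [rMat, shiftMatrix, Matrix.add_apply, Matrix.one_apply, of_apply, Fin.ext_iff,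
    ite_self]
  split_ifs <;> first | omega | simp

lemma det_rMat (a : F) : (rMat n a).det = 1 := by
  have htri : (rMat n a).IsUpperTriangular := fun i j (hij : j < i) => by
    simp only [rMat]
    rw [if_neg (by omega), if_neg (by omega)]
  rw [det_of_isUpperTriangular htri]
  exact Finset.prod_eq_one fun i _ => by simp [rMat]

lemma det_headDiagonal [NeZero n] (c : F) : (headDiagonal n c).det = c := by
  rw [headDiagonal, det_diagonal, Finset.prod_eq_single 0]
  · rw [if_pos (Fin.val_zero n)]
  · intro i _ hi
    rw [if_neg (Fin.val_ne_zero_iff.mpr hi)]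
  · simp

lemma headDiagonal_mul_rMat (c a : F) :
    headDiagonal n c * rMat n a = rMat n (c * a) * headDiagonal n c := by
  ext i j
  simp only [headDiagonal, diagonal_mul, mul_diagonal, rMat]
  split_ifs <;> first | omega | simp

lemma mul_shiftMatrix_apply (X : Matrix (Fin n) (Fin n) F) (i j : Fin n) :
    (X * shiftMatrix n : Matrix (Fin n) (Fin n) F) i j =
      if h : 0 < (j : ℕ) then X i ⟨j - 1, by omega⟩ else 0 := by
  rw [mul_apply]
  split_ifs with h
  · rw [Finset.sum_eq_single ⟨j - 1, by omega⟩]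
    · simp only [shiftMatrix, of_apply]
      rw [if_pos (by omega), mul_one]
    · intro l _ hl
      simp only [shiftMatrix, of_apply]
      rw [if_neg (fun h' => hl (Fin.ext (by simp; omega))), mul_zero]
    · simp
  · refine Finset.sum_eq_zero fun l _ => ?_
    simp only [shiftMatrix, of_apply]
    rw [if_neg (by omega), mul_zero]

lemma shiftMatrix_mul_apply (X : Matrix (Fin n) (Fin n) F) (i j : Fin n) :
    (shiftMatrix n * X : Matrix (Fin n) (Fin n) F) i j =
      if h : (i : ℕ) + 1 < n then X ⟨i + 1, h⟩ j else 0 := by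
  rw [mul_apply]
  split_ifs with h
  · rw [Finset.sum_eq_single ⟨i + 1, h⟩]
    · simp [shiftMatrix]
    · intro l _ hl
      simp only [shiftMatrix, of_apply]
      rw [if_neg (fun h' => hl (Fin.ext (by simp; omega))), zero_mul]
    · simp
  · refine Finset.sum_eq_zero fun l _ => ?_
    simp only [shiftMatrix, of_apply]
    rw [if_neg (by omega), zero_mul]

lemma shiftMatrix_pow_apply (k : ℕ) (i j : Fin n) :
    (shiftMatrix n ^ k : Matrix (Fin n) (Fin n) F) i j = if (j : ℕ) = i + k then 1 else 0 := by
  induction k generalizing j with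
  | zero => simp [Matrix.one_apply, Fin.ext_iff, eq_comm]
  | succ k ih =>
    rw [pow_succ, mul_shiftMatrix_apply]
    split_ifs <;> grind

lemma shiftMatrix_pow_self : (shiftMatrix n : Matrix (Fin n) (Fin n) F) ^ n = 0 := by
  ext i j
  rw [shiftMatrix_pow_apply, if_neg (by omega), Matrix.zero_apply]

lemma shiftMatrix_pow_pred_ne_zero [NeZero n] :
    (shiftMatrix n : Matrix (Fin n) (Fin n) F) ^ (n - 1) ≠ 0 := fun h => by
  have hn := Nat.pos_of_neZero n
  simpa [shiftMatrix_pow_apply] using congrFun (congrFun h 0) ⟨n - 1, by omega⟩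

lemma rMat_sub_one_pow_eq_zero_iff [NeZero n] {a : F} (ha : a ≠ 0) (k : ℕ) :
    (rMat n a - 1) ^ k = 0 ↔ (shiftMatrix n : Matrix (Fin n) (Fin n) F) ^ k = 0 := by
  have hsemi : SemiconjBy (headDiagonal n a) (shiftMatrix n) (rMat n a - 1) := by
    rw [SemiconjBy, eq_sub_of_add_eq' (one_add_shiftMatrix (F := F) (n := n)), mul_sub,
      headDiagonal_mul_rMat, mul_one, mul_one, sub_mul, one_mul]
  have hconj := hsemi.pow_right k
  have hD : IsUnit (headDiagonal n a) := by
    rw [isUnit_iff_isUnit_det, det_headDiagonal]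
    exact ha.isUnit
  constructor
  · intro h
    rw [SemiconjBy, h, zero_mul] at hconj
    exact hD.mul_right_eq_zero.mp hconj
  · intro h
    rw [SemiconjBy, h, mul_zero] at hconj
    exact hD.mul_left_eq_zero.mp hconj.symm

section Centralizer

variable {X : Matrix (Fin n) (Fin n) F}

lemma apply_succ_of_commute_shiftMatrix (hX : Commute X (shiftMatrix n)) (i j : ℕ)
    (hi : i + 1 < n) (hj : j < n) :
    X ⟨i + 1, hi⟩ ⟨j, hj⟩ = if h : 0 < j then X ⟨i, by omega⟩ ⟨j - 1, by omega⟩ else 0 := by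
  have := congrFun (congrFun hX.eq ⟨i, by omega⟩) ⟨j, hj⟩
  rw [mul_shiftMatrix_apply, shiftMatrix_mul_apply, dif_pos hi] at this
  exact this.symm

lemma isUpperTriangular_of_commute_shiftMatrix (hX : Commute X (shiftMatrix n)) :
    X.IsUpperTriangular := by
  suffices ∀ j i : ℕ, (hj : j < i) → (hi : i < n) → X ⟨i, hi⟩ ⟨j, by omega⟩ = 0 from
    fun i j (hij : j < i) => this j i hij i.isLt
  intro j
  induction j with
  | zero =>
    intro i hj hi
    obtain ⟨i, rfl⟩ : ∃ i', i = i' + 1 := ⟨i - 1, by omega⟩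
    simpa using apply_succ_of_commute_shiftMatrix hX i 0 hi (by omega)
  | succ j ih =>
    intro i hj hi
    obtain ⟨i, rfl⟩ : ∃ i', i = i' + 1 := ⟨i - 1, by omega⟩
    simpa [ih i (by omega)] using apply_succ_of_commute_shiftMatrix hX i (j + 1) hi (by omega)

lemma apply_self_of_commute_shiftMatrix [NeZero n] (hX : Commute X (shiftMatrix n))
    (i : Fin n) : X i i = X 0 0 := by
  obtain ⟨i, hi⟩ := i
  induction i with
  | zero => rfl
  | succ i ih =>
    simpa [ih (by omega)] using apply_succ_of_commute_shiftMatrix hX i (i + 1) hi hi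

lemma det_eq_pow_of_commute_shiftMatrix [NeZero n] (hX : Commute X (shiftMatrix n)) :
    X.det = X 0 0 ^ n := by
  rw [det_of_isUpperTriangular (isUpperTriangular_of_commute_shiftMatrix hX),
    Finset.prod_congr rfl fun i _ => apply_self_of_commute_shiftMatrix hX i,
    Finset.prod_const, Finset.card_univ, Fintype.card_fin]

lemma commute_shiftMatrix_of_commute_rMat (hX : Commute X (rMat n 1)) :
    Commute X (shiftMatrix n) := by
  rw [eq_sub_of_add_eq' (one_add_shiftMatrix (F := F) (n := n))]
  exact hX.sub_right (Commute.one_right X)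

end Centralizer

theorem exists_det_eq_one_mul_rMat_eq_iff [NeZero n] (a b : Fˣ) :
    (∃ C : Matrix (Fin n) (Fin n) F, C.det = 1 ∧ C * rMat n (a : F) = rMat n (b : F) * C) ↔
      ∃ θ : Fˣ, (b : F) = (θ : F) ^ n * (a : F) := by
  constructor
  · rintro ⟨C, hdet, hC⟩
    set X := headDiagonal n (b⁻¹ : F) * C * headDiagonal n (a : F)
    have hX : Commute X (rMat n 1) := by
      calc X * rMat n 1
          = headDiagonal n (b⁻¹ : F) * (C * rMat n (a : F)) * headDiagonal n (a : F) := by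
            rw [mul_assoc _ (headDiagonal n _), headDiagonal_mul_rMat, mul_one, ← mul_assoc,
              ← mul_assoc]
        _ = rMat n 1 * X := by
            rw [hC, ← mul_assoc, headDiagonal_mul_rMat, inv_mul_cancel₀ b.ne_zero]
            simp only [X, mul_assoc]
    have hdetX : X.det = b⁻¹ * a := by simp [X, det_headDiagonal, hdet]
    rw [det_eq_pow_of_commute_shiftMatrix (commute_shiftMatrix_of_commute_rMat hX)] at hdetX
    have hx : X 0 0 ≠ 0 := by
      rintro h
      rw [h, zero_pow (NeZero.ne n)] at hdetX
      simp at hdetX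
    refine ⟨(Units.mk0 _ hx)⁻¹, ?_⟩
    rw [Units.val_inv_eq_inv_val, Units.val_mk0, inv_pow, hdetX, Units.val_inv_eq_inv_val]
    field_simp
  · rintro ⟨θ, hb⟩
    refine ⟨(θ⁻¹ : F) • headDiagonal n ((θ : F) ^ n), ?_, ?_⟩
    · rw [det_smul, det_headDiagonal, Fintype.card_fin, ← mul_pow, inv_mul_cancel₀ θ.ne_zero,
        one_pow]
    · rw [smul_mul_assoc, headDiagonal_mul_rMat, ← hb, mul_smul_comm]

lemma exists_isUnit_mul_eq_mul_shiftMatrix {N : Matrix (Fin n) (Fin n) F} (hN : N ^ n = 0)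
    (hN' : N ^ (n - 1) ≠ 0) : ∃ P, IsUnit P ∧ N * P = P * shiftMatrix n := by
  obtain ⟨v, hv⟩ : ∃ v, N ^ (n - 1) *ᵥ v ≠ 0 := by
    by_contra! h
    exact hN' (toLin'.injective (LinearMap.ext fun v => by
      rw [toLin'_apply, h v, map_zero, LinearMap.zero_apply]))
  have hli := linearIndependent_pow_apply (toLin' N) (v := v) (n := n)
    (by rw [← toLin'_pow, hN, map_zero, LinearMap.zero_apply])
    (by rwa [← toLin'_pow, toLin'_apply])
  let P : Matrix (Fin n) (Fin n) F := of fun i j => (N ^ (j.rev : ℕ) *ᵥ v) i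
  refine ⟨P, linearIndependent_cols_iff_isUnit.mp ?_, ?_⟩
  · have hcol : P.col = (fun i : Fin n => (toLin' N ^ (i : ℕ)) v) ∘ Fin.rev := by
      ext j i
      simp [P, Matrix.col, ← toLin'_pow]
    rw [hcol]
    exact hli.comp _ Fin.rev_injective
  · ext i j
    rw [mul_shiftMatrix_apply]
    change (N *ᵥ (N ^ (j.rev : ℕ) *ᵥ v)) i = _
    rw [mulVec_mulVec, ← pow_succ']
    split_ifs with hj
    · simp only [P, of_apply, Fin.val_rev]
      congr 3
      omega
    · rw [Fin.val_rev, (by omega : n - (j + 1) + 1 = n), hN, zero_mulVec, Pi.zero_apply]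

lemma exists_det_eq_one_mul_eq_mul_rMat [NeZero n] {M : Matrix (Fin n) (Fin n) F}
    (hM : (M - 1) ^ n = 0) (hM' : (M - 1) ^ (n - 1) ≠ 0) :
    ∃ (d : Fˣ) (Q : Matrix (Fin n) (Fin n) F), Q.det = 1 ∧ M * Q = Q * rMat n (d : F) := by
  obtain ⟨P, hP, hMP⟩ := exists_isUnit_mul_eq_mul_shiftMatrix hM hM'
  have hMP' : M * P = P * rMat n 1 := by
    rw [← one_add_shiftMatrix, mul_add, ← hMP, sub_mul, one_mul, mul_one, add_sub_cancel]
  obtain ⟨d, hd⟩ := (isUnit_iff_isUnit_det P).mp hP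
  refine ⟨d, P * headDiagonal n (d⁻¹ : F), ?_, ?_⟩
  · rw [det_mul, det_headDiagonal, ← hd, mul_inv_cancel₀ d.ne_zero]
  · rw [← mul_assoc, hMP', mul_assoc, mul_assoc, headDiagonal_mul_rMat,
      inv_mul_cancel₀ d.ne_zero]

def rSL (n : ℕ) (a : Fˣ) : SpecialLinearGroup (Fin n) F := ⟨rMat n (a : F), det_rMat _⟩

lemma mk_rSL_eq_mk_rSL_iff [NeZero n] (a b : Fˣ) :
    ConjClasses.mk (rSL n a) = ConjClasses.mk (rSL n b) ↔
      a⁻¹ * b ∈ (powMonoidHom n : Fˣ →* Fˣ).range := by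
  rw [ConjClasses.mk_eq_mk_iff_isConj, SpecialLinearGroup.isConj_iff]
  refine (exists_det_eq_one_mul_rMat_eq_iff a b).trans (exists_congr fun θ => ?_)
  rw [powMonoidHom_apply, eq_inv_mul_iff_mul_eq, Units.ext_iff, Units.val_mul,
    Units.val_pow_eq_pow_val, mul_comm, eq_comm]

lemma setOf_regularUnipotent_eq_range [NeZero n] :
    {c : ConjClasses (SpecialLinearGroup (Fin n) F) | ∃ g ∈ c.carrier,
      ((g : Matrix (Fin n) (Fin n) F) - 1) ^ n = 0 ∧
      ((g : Matrix (Fin n) (Fin n) F) - 1) ^ (n - 1) ≠ 0} =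
      Set.range fun a : Fˣ => ConjClasses.mk (rSL n a) := by
  ext c
  constructor
  · rintro ⟨g, hg, hM, hM'⟩
    obtain ⟨d, Q, hQ, hgQ⟩ := exists_det_eq_one_mul_eq_mul_rMat hM hM'
    refine ⟨d, ?_⟩
    rw [← ConjClasses.mem_carrier_iff_mk_eq.mp hg, ConjClasses.mk_eq_mk_iff_isConj,
      SpecialLinearGroup.isConj_iff]
    exact ⟨Q, hQ, hgQ.symm⟩
  · rintro ⟨a, rfl⟩
    refine ⟨rSL n a, ConjClasses.mem_carrier_mk, ?_, ?_⟩
    · exact (rMat_sub_one_pow_eq_zero_iff a.ne_zero n).mpr shiftMatrix_pow_self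
    · exact (rMat_sub_one_pow_eq_zero_iff a.ne_zero _).not.mpr shiftMatrix_pow_pred_ne_zero

end

/-- `r_a` and `r_b` are conjugate in `SL_n(q)` iff `b = θⁿ a` for some
`θ ∈ F_q^×`; consequently the number of regular unipotent conjugacy classes of
`SL_n(q)` is `gcd(n, q − 1)`. -/
theorem stmt8 {F : Type*} [Field F] [Fintype F] (n : ℕ) (hn : 2 ≤ n) :
    (∀ a b : Fˣ,
      ((∃ C : Matrix (Fin n) (Fin n) F, C.det = 1 ∧
          C * rMat n (a : F) = rMat n (b : F) * C) ↔
        ∃ θ : Fˣ, (b : F) = (θ : F) ^ n * (a : F))) ∧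
    Nat.card {c : ConjClasses (Matrix.SpecialLinearGroup (Fin n) F) |
        ∃ g ∈ c.carrier,
          ((g : Matrix (Fin n) (Fin n) F) - 1) ^ n = 0 ∧
          ((g : Matrix (Fin n) (Fin n) F) - 1) ^ (n - 1) ≠ 0} =
      Nat.gcd n (Fintype.card F - 1) := by
  have : NeZero n := ⟨by omega⟩
  refine ⟨exists_det_eq_one_mul_rMat_eq_iff, ?_⟩
  rw [setOf_regularUnipotent_eq_range,
    card_range_eq_index_of_eq_iff _ _ mk_rSL_eq_mk_rSL_iff, IsCyclic.index_powMonoidHom_range,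
    Nat.card_units, Nat.card_eq_fintype_card, Nat.gcd_comm]
end

section
/- Let q be a prime power, n ≥ 2, and let x ∈ SL_n(q) be a regular unipotent upper-triangular matrix with superdiagonal entries x_{12}, x_{23}, …, x_{n−1,n} ∈ F_q^×. Then x is conjugate in SL_n(q) to r_a (the matrix with superdiagonal (a,1,…,1)) if and only if θⁿ a = x_{12} · x_{23}² · x_{34}³ ⋯ x_{n−1,n}^{n−1} for some θ ∈ F_q^×. -/
/-!
With `N = x - 1` and `M = r_a - 1`, a conjugator is a matrix `C` with `C * M = N * C`. Because `N`
is strictly upper triangular with nonzero superdiagonal, such a `C` is upper triangular, and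
comparing `(i, i + 1)` entries gives `C i i * M i (i+1) = N i (i+1) * C (i+1) (i+1)`. Telescoping
these relations yields `a * det C = v ^ n * ∏ x_{i,i+1} ^ i` with `v` the last diagonal entry of
`C`, which gives the forward direction with `θ = v⁻¹`. Conversely, for `a ≠ 0` the columns
`N ^ (n - j) e_n`, `j = 1, …, n` (the first one divided by `a`) form a solution with `v = 1`, and
scaling it by `θ⁻¹` makes its determinant `1`.
-/

open Finset Matrix

namespace Matrix

theorem pow_card_eq_zero_of_strictlyUpper {ι R : Type*} [Fintype ι] [LinearOrder ι]
    [CommRing R] {N : Matrix ι ι R} (hN : ∀ i j, j ≤ i → N i j = 0) :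
    N ^ Fintype.card ι = 0 := by
  simpa [charpoly_of_isUpperTriangular N fun i j hij => hN i j hij.le, hN]
    using aeval_self_charpoly N

theorem mul_apply_castSucc_succ {R : Type*} [NonUnitalNonAssocSemiring R] {m : ℕ}
    {A B : Matrix (Fin (m + 1)) (Fin (m + 1)) R} (hA : A.IsUpperTriangular)
    (hB : B.IsUpperTriangular) (k : Fin m) :
    (A * B) k.castSucc k.succ =
      A k.castSucc k.castSucc * B k.castSucc k.succ + A k.castSucc k.succ * B k.succ k.succ := by
  rw [mul_apply, sum_eq_add _ _ Fin.castSucc_lt_succ.ne]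
  · intro l _ ⟨hl₁, hl₂⟩
    rcases lt_or_gt_of_ne hl₁ with hl | hl
    · rw [show A k.castSucc l = 0 from hA hl, zero_mul]
    · have : k.succ < l := lt_of_le_of_ne (Fin.castSucc_lt_iff_succ_le.mp hl) (Ne.symm hl₂)
      rw [show B l k.succ = 0 from hB this, mul_zero]
  all_goals simp

theorem isUpperTriangular_of_mul_eq_mul {R : Type*} [Ring R] [NoZeroDivisors R] {m : ℕ}
    {C M N : Matrix (Fin (m + 1)) (Fin (m + 1)) R}
    (hM : ∀ i j, j ≤ i → M i j = 0) (hN : ∀ i j, j ≤ i → N i j = 0)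
    (hNsup : ∀ k : Fin m, N k.castSucc k.succ ≠ 0) (h : C * M = N * C) :
    C.IsUpperTriangular := by
  intro i j hji
  induction j using WellFoundedLT.induction generalizing i with
  | _ j ihj =>
  induction i using WellFoundedGT.induction with
  | _ i ihi =>
  obtain ⟨k, rfl⟩ : ∃ k : Fin m, k.succ = i := Fin.exists_succ_eq.mpr (Fin.ne_zero_of_lt hji)
  have hjk : j ≤ k.castSucc := Fin.le_castSucc_iff.mpr hji
  have hCM : (C * M) k.castSucc j = 0 := by
    refine mul_apply.trans (sum_eq_zero fun l _ => ?_)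
    rcases lt_or_ge l j with hl | hl
    · rw [ihj l hl (i := k.castSucc) (hl.trans_le hjk), zero_mul]
    · rw [hM l j hl, mul_zero]
  have hNC : (N * C) k.castSucc j = N k.castSucc k.succ * C k.succ j := by
    rw [mul_apply, sum_eq_single k.succ _ (absurd (mem_univ _))]
    intro l _ hl
    rcases le_or_gt l k.castSucc with hl' | hl'
    · rw [hN _ _ hl', zero_mul]
    · have : k.succ < l := lt_of_le_of_ne (Fin.castSucc_lt_iff_succ_le.mp hl') (Ne.symm hl)
      rw [ihi l this (hji.trans this), mul_zero]
  rw [h, hNC] at hCM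
  exact (mul_eq_zero.mp hCM).resolve_left (hNsup k)

end Matrix

theorem Fin.prod_mul_prod_pow_eq_of_mul_eq_mul {M : Type*} [CommMonoid M] :
    ∀ {m : ℕ} (c : Fin (m + 1) → M) (w u : Fin m → M),
      (∀ k, c k.castSucc * w k = u k * c k.succ) →
      (∏ i, c i) * ∏ k, w k ^ ((k : ℕ) + 1) =
        c (Fin.last m) ^ (m + 1) * ∏ k, u k ^ ((k : ℕ) + 1)
  | 0, c, w, u, _ => by simp
  | m + 1, c, w, u, h => by
    have ih := prod_mul_prod_pow_eq_of_mul_eq_mul (c ∘ castSucc) (w ∘ castSucc) (u ∘ castSucc)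
      fun k => by simpa only [Function.comp, succ_castSucc] using h k.castSucc
    simp only [Function.comp] at ih
    rw [prod_univ_castSucc c, prod_univ_castSucc (fun k => w k ^ ((k : ℕ) + 1)),
      prod_univ_castSucc (fun k => u k ^ ((k : ℕ) + 1))]
    simp only [val_castSucc, val_last]
    calc (∏ i : Fin (m + 1), c i.castSucc) * c (last (m + 1)) *
          ((∏ k : Fin m, w k.castSucc ^ ((k : ℕ) + 1)) * w (last m) ^ (m + 1))
        = ((∏ i : Fin (m + 1), c i.castSucc) * ∏ k : Fin m, w k.castSucc ^ ((k : ℕ) + 1)) *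
            c (last (m + 1)) * w (last m) ^ (m + 1) := by ac_rfl
      _ = (c (last m).castSucc * w (last m)) ^ (m + 1) * c (last (m + 1)) *
            ∏ k : Fin m, u k.castSucc ^ ((k : ℕ) + 1) := by rw [ih, mul_pow]; ac_rfl
      _ = _ := by rw [h, mul_pow, succ_last, pow_succ _ (m + 1)]; ac_rfl

section

variable {K : Type*} [Field K]

theorem rMat_sub_one_apply_of_le {n : ℕ} (a : K) (i j : Fin n) (h : j ≤ i) :
    (rMat n a - 1) i j = 0 := by
  rw [Fin.le_def] at h
  by_cases hij : i = j
  · subst hij; simp [rMat]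
  · have : (j : ℕ) ≠ i := fun e => hij (Fin.ext e.symm)
    simp [rMat, one_apply_ne hij, this, show (j : ℕ) ≠ i + 1 by omega]

theorem rMat_sub_one_apply_succ {m : ℕ} (a : K) (l : Fin (m + 1)) (k : Fin m) :
    (rMat (m + 1) a - 1) l k.succ =
      if l = k.castSucc then (if (k : ℕ) = 0 then a else 1) else 0 := by
  by_cases hl : l = k.castSucc
  · subst hl
    simp [rMat, Fin.castSucc_lt_succ.ne]
  · have hl' : (l : ℕ) ≠ k := fun e => hl (Fin.ext e)
    by_cases hlk : l = k.succ
    · subst hlk; simp [rMat, hl]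
    · have hlk' : (k : ℕ) + 1 ≠ l := fun e => hlk (Fin.ext e.symm)
      simp [rMat, hl, hlk', hl'.symm, one_apply_ne hlk]

theorem mul_rMat_sub_one_apply_succ {m : ℕ} (a : K) (C : Matrix (Fin (m + 1)) (Fin (m + 1)) K)
    (i : Fin (m + 1)) (k : Fin m) :
    (C * (rMat (m + 1) a - 1)) i k.succ = C i k.castSucc * (if (k : ℕ) = 0 then a else 1) := by
  simp only [mul_apply, rMat_sub_one_apply_succ, mul_ite, mul_zero, sum_ite_eq', mem_univ,
    if_true]

theorem exists_mul_rMat_sub_one_eq_mul {m : ℕ} {N : Matrix (Fin (m + 2)) (Fin (m + 2)) K}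
    (hN : ∀ i j, j ≤ i → N i j = 0) {a : K} (ha : a ≠ 0) :
    ∃ C : Matrix (Fin (m + 2)) (Fin (m + 2)) K,
      C * (rMat (m + 2) a - 1) = N * C ∧ C (Fin.last _) (Fin.last _) = 1 := by
  set C : Matrix (Fin (m + 2)) (Fin (m + 2)) K :=
    of fun i j => (if j = 0 then a⁻¹ else 1) * (N ^ (m + 1 - (j : ℕ))) i (Fin.last _)
  have hNC : ∀ i j, (N * C) i j =
      (if j = 0 then a⁻¹ else 1) * (N ^ (m + 1 - (j : ℕ) + 1)) i (Fin.last _) := by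
    intro i j
    simp only [C, mul_apply, of_apply, pow_succ', mul_left_comm (N i _), ← mul_sum]
  refine ⟨C, ?_, by simp [C]⟩
  ext i j
  cases j using Fin.cases with
  | zero =>
    have hNil : N ^ (m + 2) = 0 := by simpa using pow_card_eq_zero_of_strictlyUpper hN
    rw [hNC, mul_apply,
      sum_eq_zero fun l _ => by rw [rMat_sub_one_apply_of_le a l 0 (Fin.zero_le l), mul_zero]]
    simp [hNil]
  | succ k =>
    rw [mul_rMat_sub_one_apply_succ, hNC]
    have hexp : m + 1 - ((k : ℕ) + 1) + 1 = m + 1 - k := by omega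
    rw [Fin.val_succ, hexp]
    obtain rfl | hk := eq_or_ne k 0
    · simp [C]
      field_simp
    · simp [C, hk, Fin.val_ne_zero_iff.mpr hk]

theorem mul_det_eq_of_mul_rMat_sub_one_eq_mul {m : ℕ} {a : K}
    {C N : Matrix (Fin (m + 2)) (Fin (m + 2)) K}
    (hN : ∀ i j, j ≤ i → N i j = 0) (hNsup : ∀ k : Fin (m + 1), N k.castSucc k.succ ≠ 0)
    (h : C * (rMat (m + 2) a - 1) = N * C) :
    a * C.det = C (Fin.last _) (Fin.last _) ^ (m + 2) *
      ∏ k : Fin (m + 1), N k.castSucc k.succ ^ ((k : ℕ) + 1) := by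
  have hC := isUpperTriangular_of_mul_eq_mul (rMat_sub_one_apply_of_le a) hN hNsup h
  have hdiag : ∀ k : Fin (m + 1), C k.castSucc k.castSucc * (if (k : ℕ) = 0 then a else 1) =
      N k.castSucc k.succ * C k.succ k.succ := by
    intro k
    have := congr_fun (congr_fun h k.castSucc) k.succ
    rwa [mul_rMat_sub_one_apply_succ,
      mul_apply_castSucc_succ (A := N) (fun _ _ h => hN _ _ h.le) hC, hN _ _ le_rfl, zero_mul,
      zero_add] at this
  have hw : ∏ k : Fin (m + 1), (if (k : ℕ) = 0 then a else 1) ^ ((k : ℕ) + 1) = a := by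
    simp
  rw [det_of_isUpperTriangular hC,
    ← Fin.prod_mul_prod_pow_eq_of_mul_eq_mul (fun i => C i i) _ _ hdiag, hw, mul_comm]

theorem exists_units_pow_mul_eq_of_det_eq_one {m : ℕ} {a : K}
    {C N : Matrix (Fin (m + 2)) (Fin (m + 2)) K}
    (hN : ∀ i j, j ≤ i → N i j = 0) (hNsup : ∀ k : Fin (m + 1), N k.castSucc k.succ ≠ 0)
    (hdet : C.det = 1) (h : C * (rMat (m + 2) a - 1) = N * C) :
    ∃ θ : Kˣ, (θ : K) ^ (m + 2) * a =
      ∏ k : Fin (m + 1), N k.castSucc k.succ ^ ((k : ℕ) + 1) := by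
  have hv : C (Fin.last _) (Fin.last _) ≠ 0 := fun h0 => by
    rw [det_of_isUpperTriangular
      (isUpperTriangular_of_mul_eq_mul (rMat_sub_one_apply_of_le a) hN hNsup h),
      prod_eq_zero (f := fun i => C i i) (mem_univ _) h0] at hdet
    exact zero_ne_one hdet
  refine ⟨(Units.mk0 _ hv)⁻¹, ?_⟩
  rw [← mul_one a, ← hdet, mul_det_eq_of_mul_rMat_sub_one_eq_mul hN hNsup h, ← mul_assoc,
    Units.val_inv_eq_inv_val, Units.val_mk0, ← mul_pow, inv_mul_cancel₀ hv, one_pow, one_mul]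

theorem exists_det_eq_one_of_units_pow_mul_eq {m : ℕ} {a : K}
    {N : Matrix (Fin (m + 2)) (Fin (m + 2)) K}
    (hN : ∀ i j, j ≤ i → N i j = 0) (hNsup : ∀ k : Fin (m + 1), N k.castSucc k.succ ≠ 0)
    (θ : Kˣ)
    (hθ : (θ : K) ^ (m + 2) * a = ∏ k : Fin (m + 1), N k.castSucc k.succ ^ ((k : ℕ) + 1)) :
    ∃ C : Matrix (Fin (m + 2)) (Fin (m + 2)) K,
      C.det = 1 ∧ C * (rMat (m + 2) a - 1) = N * C := by
  have ha : a ≠ 0 := by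
    rintro rfl
    exact prod_ne_zero_iff.mpr (fun k _ => pow_ne_zero _ (hNsup k)) (by simpa using hθ.symm)
  obtain ⟨C, hC, hlast⟩ := exists_mul_rMat_sub_one_eq_mul hN ha
  have hθC : ((θ⁻¹ : K) • C) * (rMat (m + 2) a - 1) = N * ((θ⁻¹ : K) • C) := by
    rw [smul_mul_assoc, hC, mul_smul_comm]
  refine ⟨(θ⁻¹ : K) • C, mul_left_cancel₀ ha ?_, hθC⟩
  rw [mul_det_eq_of_mul_rMat_sub_one_eq_mul hN hNsup hθC, Matrix.smul_apply, hlast, smul_eq_mul,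
    mul_one, ← hθ, inv_pow, ← mul_assoc, inv_mul_cancel₀ (pow_ne_zero _ θ.ne_zero), one_mul,
    mul_one]

end

theorem mul_eq_mul_iff_mul_sub_one_eq_sub_one_mul {R : Type*} [Ring R] (c a b : R) :
    c * a = b * c ↔ c * (a - 1) = (b - 1) * c := by
  rw [mul_sub, sub_mul, mul_one, one_mul, sub_left_inj]

/-- Let `x ∈ SL_n(q)` be upper triangular with `1`s on the diagonal and nonzero
superdiagonal entries (hence regular unipotent).  Then `x` is conjugate in
`SL_n(q)` to `r_a` iff `θⁿ a = x₁₂ · x₂₃² ⋯ x_{n−1,n}^{n−1}` for some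
`θ ∈ F_q^×`. -/
theorem stmt9 {F : Type*} [Field F] (n : ℕ) (hn : 2 ≤ n)
    (x : Matrix (Fin n) (Fin n) F)
    (hdiag : ∀ i, x i i = 1)
    (hlow : ∀ i j : Fin n, (j : ℕ) < (i : ℕ) → x i j = 0)
    (hsup : ∀ i j : Fin n, (j : ℕ) = (i : ℕ) + 1 → x i j ≠ 0)
    (a : F) :
    (∃ C : Matrix (Fin n) (Fin n) F, C.det = 1 ∧ C * rMat n a = x * C) ↔
      ∃ θ : Fˣ, (θ : F) ^ n * a =
        ∏ i : Fin (n - 1),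
          x ⟨(i : ℕ), by omega⟩ ⟨(i : ℕ) + 1, by omega⟩ ^ ((i : ℕ) + 1) := by
  obtain ⟨m, rfl⟩ : ∃ m, n = m + 2 := ⟨n - 2, by omega⟩
  have hN : ∀ i j, j ≤ i → (x - 1) i j = 0 := by
    intro i j hji
    rcases hji.lt_or_eq with h | rfl
    · simp [hlow i j h, one_apply_ne h.ne']
    · simp [hdiag]
  have hxsup (k : Fin (m + 1)) : (x - 1) k.castSucc k.succ = x k.castSucc k.succ := by
    simp [one_apply_ne Fin.castSucc_lt_succ.ne]
  have hNsup (k : Fin (m + 1)) : (x - 1) k.castSucc k.succ ≠ 0 := hxsup k ▸ hsup _ _ rfl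
  have hP : ∏ i : Fin (m + 2 - 1), x ⟨i, by omega⟩ ⟨i + 1, by omega⟩ ^ ((i : ℕ) + 1) =
      ∏ k : Fin (m + 1), (x - 1) k.castSucc k.succ ^ ((k : ℕ) + 1) := by
    -- `Fin (m + 2 - 1)` and `Fin (m + 1)` agree definitionally
    simp only [hxsup]; rfl
  simp only [mul_eq_mul_iff_mul_sub_one_eq_sub_one_mul _ (rMat _ a), hP]
  exact ⟨fun ⟨C, hdet, hC⟩ => exists_units_pow_mul_eq_of_det_eq_one hN hNsup hdet hC,
    fun ⟨θ, hθ⟩ => exists_det_eq_one_of_units_pow_mul_eq hN hNsup θ hθ⟩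
end

section
/- Let q be odd, G = SL_3(q), u the unipotent matrix with u₁₂ = 1 and all other off-diagonal entries 0 (type (2,1)). Let r = u and s the transpose-like conjugate with s₃₁ = 1 (obtained by conjugating r by the 3-cycle permutation matrix). Then (rs)² ≠ (sr)², the subgroup H = ⟨r, s⟩ consists of the matrices with rows (1, a, 0; 0, 1, 0; c, b+ac, 1) for a, b, c ∈ F_p, and the H-conjugacy classes of r and s are distinct; hence the class of u in SL_3(q) is of type D. -/
/-!
Every matrix in sight has the shape `heisMat a b c = (1, a, 0; 0, 1, 0; c, b + a c, 1)`, and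
these multiply like a Heisenberg group:
`heisMat a b c * heisMat a' b' c' = heisMat (a + a') (b + b' - a c') (c + c')`.
Hence `r = heisMat 1 0 0`, `s = heisMat 0 0 1`, their inverses and the commutator
`[r, s] = heisMat 0 (-1) 0` generate exactly the matrices with integer parameters, i.e. those
with parameters in `𝔽_p`. Comparing `b`-parameters, `(rs)² = heisMat 2 (-3) 2` and
`(sr)² = heisMat 2 (-1) 2` differ as soon as `2 ≠ 0`. Finally `k r = s k` forces `k₀₀ = 0`,
while every element of `H` has `k₀₀ = 1`.
-/

open Matrix

lemma Submonoid.int_family_mem {M : Type*} [Monoid M] (S : Submonoid M) (f : ℤ → M)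
    (hf0 : f 0 = 1) (hf : ∀ m n, f (m + n) = f m * f n) (h1 : f 1 ∈ S) (hneg1 : f (-1) ∈ S)
    (n : ℤ) : f n ∈ S := by
  induction n using Int.induction_on with
  | zero => exact hf0 ▸ S.one_mem
  | succ n ih => exact (hf n 1).symm ▸ S.mul_mem ih h1
  | pred n ih => exact (hf (-n) (-1)).symm ▸ S.mul_mem ih hneg1

lemma Matrix.apply_zero_zero_eq_zero_of_mul_transvection {R : Type*} [Ring R]
    {k : Matrix (Fin 3) (Fin 3) R} (h : k * (1 + single 0 1 1) = (1 + single 2 0 1) * k) :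
    k 0 0 = 0 := by
  simpa [add_mul, mul_add, mul_apply, single_apply, Fin.sum_univ_three] using congr_fun₂ h 0 1

namespace Matrix

variable {R : Type*} [CommRing R]

def heisMat (a b c : R) : Matrix (Fin 3) (Fin 3) R :=
  !![1, a, 0; 0, 1, 0; c, b + a * c, 1]

lemma heisMat_mul (a b c a' b' c' : R) :
    heisMat a b c * heisMat a' b' c' = heisMat (a + a') (b + b' - a * c') (c + c') := by
  ext i j
  fin_cases i <;> fin_cases j <;> simp [heisMat, mul_apply, Fin.sum_univ_three] <;> ring

lemma heisMat_zero : heisMat (0 : R) 0 0 = 1 := by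
  ext i j
  fin_cases i <;> fin_cases j <;> simp [heisMat]

lemma heisMat_inj {a b c a' b' c' : R} :
    heisMat a b c = heisMat a' b' c' ↔ a = a' ∧ b = b' ∧ c = c' := by
  refine ⟨fun h => ?_, by rintro ⟨rfl, rfl, rfl⟩; rfl⟩
  have ha : a = a' := by simpa [heisMat] using congr_fun₂ h 0 1
  have hc : c = c' := by simpa [heisMat] using congr_fun₂ h 2 0
  have hb : b + a * c = b' + a' * c' := by simpa [heisMat] using congr_fun₂ h 2 1
  subst ha hc
  exact ⟨rfl, add_right_cancel hb, rfl⟩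

lemma one_add_single_zero_one (x : R) : 1 + single 0 1 x = heisMat x 0 0 := by
  ext i j
  fin_cases i <;> fin_cases j <;> simp [heisMat]

lemma one_add_single_two_zero (x : R) : 1 + single 2 0 x = heisMat 0 0 x := by
  ext i j
  fin_cases i <;> fin_cases j <;> simp [heisMat]

lemma one_sub_single_zero_one (x : R) : 1 - single 0 1 x = heisMat (-x) 0 0 := by
  rw [sub_eq_add_neg, single_neg, one_add_single_zero_one]

lemma one_sub_single_two_zero (x : R) : 1 - single 2 0 x = heisMat 0 0 (-x) := by
  rw [sub_eq_add_neg, single_neg, one_add_single_two_zero]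

variable (R) in
def heisIntSubmonoid : Submonoid (Matrix (Fin 3) (Fin 3) R) where
  carrier := {M | ∃ a b c : ℤ, M = heisMat (a : R) b c}
  one_mem' := ⟨0, 0, 0, by simp [heisMat_zero]⟩
  mul_mem' := by
    rintro _ _ ⟨a, b, c, rfl⟩ ⟨a', b', c', rfl⟩
    exact ⟨a + a', b + b' - a * c', c + c', by push_cast; exact heisMat_mul ..⟩

lemma heisMat_int_mem_closure (a b c : ℤ) :
    heisMat (a : R) b c ∈ Submonoid.closure
      {heisMat 1 0 0, heisMat (-1) 0 0, heisMat 0 0 1, heisMat 0 0 (-1)} := by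
  set H := Submonoid.closure
    {heisMat (1 : R) 0 0, heisMat (-1) 0 0, heisMat 0 0 1, heisMat 0 0 (-1)}
  have hr : heisMat (1 : R) 0 0 ∈ H := Submonoid.subset_closure (by simp)
  have hr' : heisMat (-1 : R) 0 0 ∈ H := Submonoid.subset_closure (by simp)
  have hs : heisMat (0 : R) 0 1 ∈ H := Submonoid.subset_closure (by simp)
  have hs' : heisMat (0 : R) 0 (-1) ∈ H := Submonoid.subset_closure (by simp)
  have ha : heisMat (a : R) 0 0 ∈ H :=
    H.int_family_mem (fun n => heisMat (n : R) 0 0) (by simp [heisMat_zero])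
      (fun m n => by simp [heisMat_mul]) (by simpa using hr) (by simpa using hr') a
  have hc : heisMat (0 : R) 0 c ∈ H :=
    H.int_family_mem (fun n => heisMat (0 : R) 0 n) (by simp [heisMat_zero])
      (fun m n => by simp [heisMat_mul]) (by simpa using hs) (by simpa using hs') c
  have hb (b : ℤ) : heisMat (0 : R) b 0 ∈ H := by
    refine H.int_family_mem (fun n => heisMat (0 : R) n 0) (by simp [heisMat_zero])
      (fun m n => by simp [heisMat_mul]) ?_ ?_ b
    · simpa [heisMat_mul] using H.mul_mem (H.mul_mem (H.mul_mem hs hr) hs') hr'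
    · simpa [heisMat_mul] using H.mul_mem (H.mul_mem (H.mul_mem hr hs) hr') hs'
  have hfactor :
      heisMat (a : R) 0 0 * heisMat 0 ((b + a * c : ℤ) : R) 0 * heisMat 0 0 (c : R) =
        heisMat (a : R) b c := by
    rw [heisMat_mul, heisMat_mul]; push_cast; ring_nf
  exact hfactor ▸ H.mul_mem (H.mul_mem ha (hb _)) hc

lemma closure_heisMat_generators :
    Submonoid.closure
        {heisMat 1 0 0, heisMat (-1) 0 0, heisMat 0 0 1, heisMat 0 0 (-1)} =
      heisIntSubmonoid R := by
  refine le_antisymm (Submonoid.closure_le.mpr ?_) ?_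
  · rintro _ (rfl | rfl | rfl | rfl)
    exacts [⟨1, 0, 0, by simp⟩, ⟨-1, 0, 0, by simp⟩, ⟨0, 0, 1, by simp⟩, ⟨0, 0, -1, by simp⟩]
  · rintro _ ⟨a, b, c, rfl⟩
    exact heisMat_int_mem_closure a b c

lemma coe_closure_transvections :
    (Submonoid.closure ({1 + single 0 1 1, 1 - single 0 1 1, 1 + single 2 0 1,
        1 - single 2 0 1} : Set (Matrix (Fin 3) (Fin 3) R)) : Set (Matrix (Fin 3) (Fin 3) R)) =
      {M | ∃ a b c : ℤ, M = heisMat (a : R) b c} := by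
  simp only [one_add_single_zero_one, one_sub_single_zero_one, one_add_single_two_zero,
    one_sub_single_two_zero, closure_heisMat_generators]
  rfl

lemma heisMat_zmod_eq_int {n : ℕ} (φ : ZMod n →+* R) :
    {M | ∃ a b c : ZMod n, M = heisMat (φ a) (φ b) (φ c)} =
      {M | ∃ a b c : ℤ, M = heisMat (a : R) b c} := by
  ext M
  constructor
  · rintro ⟨a, b, c, rfl⟩
    obtain ⟨a, rfl⟩ := ZMod.intCast_surjective a
    obtain ⟨b, rfl⟩ := ZMod.intCast_surjective b
    obtain ⟨c, rfl⟩ := ZMod.intCast_surjective c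
    exact ⟨a, b, c, by simp only [map_intCast]⟩
  · rintro ⟨a, b, c, rfl⟩
    exact ⟨a, b, c, by simp only [map_intCast]⟩

lemma transvection_mul_sq_ne (h2 : (2 : R) ≠ 0) :
    ((1 + single 0 1 1) * (1 + single 2 0 1) : Matrix (Fin 3) (Fin 3) R) ^ 2 ≠
      ((1 + single 2 0 1) * (1 + single 0 1 1)) ^ 2 := by
  rw [one_add_single_zero_one, one_add_single_two_zero, sq, sq, heisMat_mul, heisMat_mul,
    heisMat_mul, heisMat_mul, Ne, heisMat_inj]
  rintro ⟨-, hb, -⟩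
  exact h2 (by linear_combination -hb)

end Matrix

theorem stmt11_general {F : Type*} [Field F] (p : ℕ)
    [CharP F p] (hp2 : p ≠ 2) :
    let φ : ZMod p →+* F := ZMod.castHom (dvd_refl p) F
    let r : Matrix (Fin 3) (Fin 3) F := 1 + Matrix.single 0 1 1
    let s : Matrix (Fin 3) (Fin 3) F := 1 + Matrix.single 2 0 1
    let H := Submonoid.closure
      {r, 1 - Matrix.single 0 1 1, s, 1 - Matrix.single 2 0 1}
    (r * s) ^ 2 ≠ (s * r) ^ 2 ∧
    (H : Set (Matrix (Fin 3) (Fin 3) F)) =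
      {M | ∃ a b c : ZMod p,
        M = !![1, φ a, 0; 0, 1, 0; φ c, φ b + φ a * φ c, 1]} ∧
    ¬ ∃ k ∈ H, k * r = s * k := by
  intro φ r s H
  have hH : (H : Set (Matrix (Fin 3) (Fin 3) F)) = {M | ∃ a b c : ℤ, M = heisMat (a : F) b c} :=
    coe_closure_transvections
  refine ⟨transvection_mul_sq_ne (Ring.two_ne_zero (ringChar.eq F p ▸ hp2)),
    hH.trans (heisMat_zmod_eq_int φ).symm, ?_⟩
  rintro ⟨k, hk, hkr⟩
  have hk' : k ∈ (H : Set (Matrix (Fin 3) (Fin 3) F)) := hk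
  rw [hH] at hk'
  obtain ⟨a, b, c, rfl⟩ := hk'
  exact one_ne_zero (apply_zero_zero_eq_zero_of_mul_transvection hkr)

/-- Let `q = p^m` with `p` an odd prime, `F = F_q`, and in `SL_3(q)` let
`r = u = I₃ + e₁₂` (unipotent of type `(2,1)`) and `s = I₃ + e₃₁` (the conjugate
of `r` by the 3-cycle permutation matrix).  Then `(rs)² ≠ (sr)²`, the subgroup
`H = ⟨r, s⟩` consists exactly of the matrices `(1, a, 0; 0, 1, 0; c, b+ac, 1)`
with `a, b, c ∈ F_p`, and the `H`-conjugacy classes of `r` and `s` are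
distinct; hence the class of `u` in `SL_3(q)` is of type D. -/
theorem stmt11 {F : Type*} [Field F] [Fintype F] (p : ℕ) [Fact p.Prime]
    [CharP F p] (hp2 : p ≠ 2) :
    let φ : ZMod p →+* F := ZMod.castHom (dvd_refl p) F
    let r : Matrix (Fin 3) (Fin 3) F := 1 + Matrix.single 0 1 1
    let s : Matrix (Fin 3) (Fin 3) F := 1 + Matrix.single 2 0 1
    let H := Submonoid.closure
      {r, 1 - Matrix.single 0 1 1, s, 1 - Matrix.single 2 0 1}
    (r * s) ^ 2 ≠ (s * r) ^ 2 ∧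
    (H : Set (Matrix (Fin 3) (Fin 3) F)) =
      {M | ∃ a b c : ZMod p,
        M = !![1, φ a, 0; 0, 1, 0; φ c, φ b + φ a * φ c, 1]} ∧
    ¬ ∃ k ∈ H, k * r = s * k :=
  stmt11_general p hp2
end

section
/- Let q > 3 be a prime power, u = I₂ + e₁₂ ∈ GL_2(q). Let R (resp. S) be the set of conjugates AuA⁻¹ with det A a non-square (resp. square) in F_q^×. Then R and S are disjoint subracks of the conjugacy class of u in GL_2(q) with R ▷ S ⊆ S and S ▷ R ⊆ R, and there exist r ∈ R, s ∈ S with r ▷ (s ▷ (r ▷ s)) ≠ s. Hence the conjugacy class of u in GL_2(q) is of type D. -/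
/-!
A matrix commuting with `u = !![1, 1; 0, 1]` has the form `a • 1 + b • (u - 1)`, so its
determinant `a ^ 2` is a square. Hence if `A u A⁻¹ = B u B⁻¹` then `B⁻¹ A` centralizes `u` and
`det A`, `det B` lie in the same square class: `R` and `S` are disjoint. Since `det u = 1`, every
conjugate `x` of `u` has determinant `1`, and `x (B u B⁻¹) x⁻¹ = (x B) u (x B)⁻¹` with
`det (x B) = det B`, which gives the four closure properties.

For the last claim take a nonsquare `e ∉ {0, 2}`, `s = u` and `r = A u A⁻¹` with
`A = !![e, 0; e, 1]`, i.e. `r = !![1 - e, e; -e, 1 + e]`. The identity `r ▷ (s ▷ (r ▷ s)) = s`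
is equivalent to `r s r s = s r s r`, and the `(1, 1)` entries of the two sides differ by
`e (e - 2)`.
-/

open Matrix

namespace Matrix

variable {n K : Type*} [Fintype n] [DecidableEq n] [CommRing K]

def conjugatesWithDet (u : Matrix n n K) (P : K → Prop) : Set (Matrix n n K) :=
  {m | ∃ A : Matrix n n K, IsUnit A.det ∧ P A.det ∧ m = A * u * A⁻¹}

lemma conjugatesWithDet_not_union_self (u : Matrix n n K) (P : K → Prop) :
    conjugatesWithDet u (fun d => ¬ P d) ∪ conjugatesWithDet u P =
      {m | ∃ A : Matrix n n K, IsUnit A.det ∧ m = A * u * A⁻¹} := by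
  ext m
  constructor
  · rintro (⟨A, hA, -, rfl⟩ | ⟨A, hA, -, rfl⟩) <;> exact ⟨A, hA, rfl⟩
  · rintro ⟨A, hA, rfl⟩
    by_cases hP : P A.det
    · exact Or.inr ⟨A, hA, hP, rfl⟩
    · exact Or.inl ⟨A, hA, hP, rfl⟩

lemma mul_conj_mul_inv (x B u : Matrix n n K) :
    x * (B * u * B⁻¹) * x⁻¹ = (x * B) * u * (x * B)⁻¹ := by
  simp only [mul_inv_rev, Matrix.mul_assoc]

lemma det_eq_one_of_mem_conjugatesWithDet {u x : Matrix n n K} {P : K → Prop}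
    (hu : u.det = 1) (hx : x ∈ conjugatesWithDet u P) : x.det = 1 := by
  obtain ⟨A, hA, -, rfl⟩ := hx
  rw [det_conj ((isUnit_iff_isUnit_det A).mpr hA), hu]

lemma mul_mul_inv_mem_conjugatesWithDet {u x y : Matrix n n K} {P Q : K → Prop}
    (hu : u.det = 1) (hx : x ∈ conjugatesWithDet u P) (hy : y ∈ conjugatesWithDet u Q) :
    x * y * x⁻¹ ∈ conjugatesWithDet u Q := by
  obtain ⟨B, hB, hQB, rfl⟩ := hy
  have hxB : (x * B).det = B.det := by
    rw [det_mul, det_eq_one_of_mem_conjugatesWithDet hu hx, one_mul]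
  exact ⟨x * B, hxB ▸ hB, hxB ▸ hQB, mul_conj_mul_inv x B u⟩

lemma isSquare_det_of_conj_eq {u A B : Matrix n n K}
    (hcent : ∀ M, Commute M u → IsSquare M.det) (hA : IsUnit A.det) (hB : IsUnit B.det)
    (h : A * u * A⁻¹ = B * u * B⁻¹) (hsq : IsSquare B.det) : IsSquare A.det := by
  have hcomm : Commute (B⁻¹ * A) u :=
    calc B⁻¹ * A * u = B⁻¹ * (A * u * A⁻¹) * A := by
          simp only [Matrix.mul_assoc, nonsing_inv_mul _ hA, Matrix.mul_one]
      _ = u * (B⁻¹ * A) := by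
          rw [h]; simp only [← Matrix.mul_assoc, nonsing_inv_mul _ hB, Matrix.one_mul]
  have hdet : A.det = B.det * (B⁻¹ * A).det := by
    rw [← det_mul, mul_nonsing_inv_cancel_left _ _ hB]
  rw [hdet]
  exact hsq.mul (hcent _ hcomm)

lemma disjoint_conjugatesWithDet_isSquare {u : Matrix n n K}
    (hcent : ∀ M, Commute M u → IsSquare M.det) :
    Disjoint (conjugatesWithDet u (fun d => ¬ IsSquare d)) (conjugatesWithDet u IsSquare) := by
  rw [Set.disjoint_left]
  rintro m ⟨A, hA, hAns, rfl⟩ ⟨B, hB, hBs, hm⟩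
  exact hAns (isSquare_det_of_conj_eq hcent hA hB hm hBs)

lemma conj_conj_conj_eq_iff {r s : Matrix n n K} (hr : IsUnit r.det) (hs : IsUnit s.det) :
    r * (s * (r * s * r⁻¹) * s⁻¹) * r⁻¹ = s ↔ r * s * r * s = s * r * s * r := by
  constructor
  · intro h
    calc r * s * r * s = r * (s * (r * s * r⁻¹) * s⁻¹) * r⁻¹ * (r * s * r) := by
          simp only [Matrix.mul_assoc, nonsing_inv_mul_cancel_left, nonsing_inv_mul, hr, hs,
            Matrix.mul_one]
      _ = s * r * s * r := by rw [h]; simp only [Matrix.mul_assoc]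
  · intro h
    calc r * (s * (r * s * r⁻¹) * s⁻¹) * r⁻¹ = r * s * r * s * r⁻¹ * s⁻¹ * r⁻¹ := by
          simp only [Matrix.mul_assoc]
      _ = s := by
          rw [h]
          simp only [mul_nonsing_inv_cancel_right _ _ hr, mul_nonsing_inv_cancel_right _ _ hs]

lemma transvection_zero_one_one_eq :
    (transvection 0 1 1 : Matrix (Fin 2) (Fin 2) K) = !![1, 1; 0, 1] := by
  ext i j
  fin_cases i <;> fin_cases j <;> simp [transvection]

lemma isSquare_det_of_commute_transvection {M : Matrix (Fin 2) (Fin 2) K}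
    (h : Commute M (transvection 0 1 1)) : IsSquare M.det := by
  rw [transvection_zero_one_one_eq, Commute, SemiconjBy, eta_fin_two M, mul_fin_two,
    mul_fin_two] at h
  have h00 := congrFun₂ h 0 0
  have h01 := congrFun₂ h 0 1
  simp only [of_apply, cons_val', cons_val_zero, cons_val_one, cons_val_fin_one] at h00 h01
  refine ⟨M 0 0, ?_⟩
  rw [det_fin_two]
  linear_combination (M 0 1) * h00 - (M 0 0) * h01

lemma transvection_conj_mul (e : K) :
    !![1 - e, e; -e, 1 + e] * !![e, 0; e, 1] = !![e, 0; e, 1] * transvection 0 1 1 := by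
  rw [transvection_zero_one_one_eq]
  ext i j
  fin_cases i <;> fin_cases j <;> simp <;> ring

lemma conj_mul_transvection_sq_ne [IsDomain K] {e : K} (he0 : e ≠ 0) (he2 : e ≠ 2) :
    !![1 - e, e; -e, 1 + e] * transvection 0 1 1 * !![1 - e, e; -e, 1 + e] *
        transvection 0 1 1 ≠
      transvection 0 1 1 * !![1 - e, e; -e, 1 + e] * transvection 0 1 1 *
        !![1 - e, e; -e, 1 + e] := by
  rw [transvection_zero_one_one_eq]
  simp only [mul_fin_two]
  intro h
  have h11 := congrFun₂ h 1 1
  simp only [of_apply, cons_val', cons_val_one, cons_val_fin_one] at h11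
  exact mul_ne_zero he0 (sub_ne_zero.mpr he2) (by linear_combination h11)

lemma eq_transvection_conj {F : Type*} [Field F] {e : F} (he : e ≠ 0) :
    !![1 - e, e; -e, 1 + e] = !![e, 0; e, 1] * transvection 0 1 1 * !![e, 0; e, 1]⁻¹ := by
  have hA : IsUnit (!![e, 0; e, 1] : Matrix (Fin 2) (Fin 2) F).det := by simpa using he
  calc !![1 - e, e; -e, 1 + e] = !![1 - e, e; -e, 1 + e] * !![e, 0; e, 1] * !![e, 0; e, 1]⁻¹ :=
        (mul_nonsing_inv_cancel_right _ _ hA).symm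
    _ = _ := by rw [transvection_conj_mul]

end Matrix

namespace FiniteField

variable {F : Type*} [Field F] [Fintype F]

lemma exists_ne_zero_sq_ne_one (hF : 3 < Fintype.card F) : ∃ a : F, a ≠ 0 ∧ a ^ 2 ≠ 1 := by
  classical
  have hcard : ({0, 1, -1} : Finset F).card < (Finset.univ : Finset F).card :=
    Finset.card_le_three.trans_lt hF
  obtain ⟨a, -, ha⟩ := Finset.exists_mem_notMem_of_card_lt_card hcard
  simp only [Finset.mem_insert, Finset.mem_singleton, not_or] at ha
  exact ⟨a, ha.1, sq_ne_one_iff.mpr ha.2⟩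

lemma exists_not_isSquare_ne (hF : ringChar F ≠ 2) (hF3 : 3 < Fintype.card F) (c : F) :
    ∃ e : F, ¬ IsSquare e ∧ e ≠ c := by
  obtain ⟨b, hb⟩ := exists_nonsquare hF
  by_cases hbc : b = c
  · obtain ⟨a, ha0, ha⟩ := exists_ne_zero_sq_ne_one hF3
    have hb0 : b ≠ 0 := by rintro rfl; exact hb IsSquare.zero
    refine ⟨b * a ^ 2, fun h => hb ?_, fun h => ha ?_⟩
    · simpa [ha0] using h.div (IsSquare.sq a)
    · rw [← hbc] at h
      exact mul_left_cancel₀ hb0 (h.trans (mul_one b).symm)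
  · exact ⟨b, hb, hbc⟩

end FiniteField

/-- Let `q > 3` be odd and `u = I₂ + e₁₂ ∈ GL_2(q)`.  Let `R` (resp. `S`) be the
set of conjugates `A u A⁻¹` with `det A` a non-square (resp. a square) in
`F_q^×`.  Then `R` and `S` are disjoint subracks of the conjugacy class of `u`
covering it, with `R ▷ S ⊆ S` and `S ▷ R ⊆ R`, and there exist `r ∈ R`, `s ∈ S`
with `r ▷ (s ▷ (r ▷ s)) ≠ s`; hence the class of `u` in `GL_2(q)` is of
type D. -/
theorem stmt12 {F : Type*} [Field F] [Fintype F]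
    (hq : Odd (Fintype.card F)) (hq3 : 3 < Fintype.card F) :
    let u : Matrix (Fin 2) (Fin 2) F := 1 + Matrix.single 0 1 1
    let R : Set (Matrix (Fin 2) (Fin 2) F) :=
      {m | ∃ A : Matrix (Fin 2) (Fin 2) F,
        IsUnit A.det ∧ ¬ IsSquare A.det ∧ m = A * u * A⁻¹}
    let S : Set (Matrix (Fin 2) (Fin 2) F) :=
      {m | ∃ A : Matrix (Fin 2) (Fin 2) F,
        IsUnit A.det ∧ IsSquare A.det ∧ m = A * u * A⁻¹}
    Disjoint R S ∧
    R ∪ S = {m | ∃ A : Matrix (Fin 2) (Fin 2) F, IsUnit A.det ∧ m = A * u * A⁻¹} ∧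
    (∀ x ∈ R, ∀ y ∈ R, x * y * x⁻¹ ∈ R) ∧
    (∀ x ∈ S, ∀ y ∈ S, x * y * x⁻¹ ∈ S) ∧
    (∀ x ∈ R, ∀ y ∈ S, x * y * x⁻¹ ∈ S) ∧
    (∀ x ∈ S, ∀ y ∈ R, x * y * x⁻¹ ∈ R) ∧
    ∃ r ∈ R, ∃ s ∈ S, r * (s * (r * s * r⁻¹) * s⁻¹) * r⁻¹ ≠ s := by
  intro u R S
  have hu : u.det = 1 := det_transvection_of_ne 0 1 (by decide) 1
  have hcent : ∀ M, Commute M u → IsSquare M.det :=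
    fun _ => isSquare_det_of_commute_transvection
  rw [show R = conjugatesWithDet u (fun d => ¬ IsSquare d) from rfl,
    show S = conjugatesWithDet u IsSquare from rfl]
  refine ⟨disjoint_conjugatesWithDet_isSquare hcent, conjugatesWithDet_not_union_self u IsSquare,
    fun x hx y hy => mul_mul_inv_mem_conjugatesWithDet hu hx hy,
    fun x hx y hy => mul_mul_inv_mem_conjugatesWithDet hu hx hy,
    fun x hx y hy => mul_mul_inv_mem_conjugatesWithDet hu hx hy,
    fun x hx y hy => mul_mul_inv_mem_conjugatesWithDet hu hx hy, ?_⟩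
  have hchar : ringChar F ≠ 2 := by
    rwa [Ne, FiniteField.even_card_iff_char_two, ← Nat.even_iff, Nat.not_even_iff_odd]
  obtain ⟨e, he, he2⟩ := FiniteField.exists_not_isSquare_ne hchar hq3 2
  have he0 : e ≠ 0 := by rintro rfl; exact he IsSquare.zero
  have hAdet : (!![e, 0; e, 1] : Matrix (Fin 2) (Fin 2) F).det = e := by simp
  have hr : !![1 - e, e; -e, 1 + e] ∈ conjugatesWithDet u (fun d => ¬ IsSquare d) :=
    ⟨_, by rw [hAdet]; exact he0.isUnit, by rw [hAdet]; exact he, eq_transvection_conj he0⟩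
  have hs : u ∈ conjugatesWithDet u IsSquare := ⟨1, by simp, by simp, by simp⟩
  refine ⟨_, hr, u, hs, ?_⟩
  rw [Ne, conj_conj_conj_eq_iff (by simp [det_eq_one_of_mem_conjugatesWithDet hu hr])
    (by simp [hu])]
  exact conj_mul_transvection_sq_ne he0 he2
end

section
/- Let q be even and n ≥ 2, and let O be the conjugacy class in SL_n(q) of r = I_n + e_{1,n} (unipotent of type (2,1,…,1)). Then O is not of type D: for any s ∈ O with [r, s] ≠ 1, either (rs)² = (sr)² or the conjugacy classes of r and s in ⟨r, s⟩ coincide. -/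
/-!
Every element of the class is `1 + e` with `e = u vᵀ` a rank-one matrix with `vᵀ u = 0`, so
`e² = 0`. For two of them, `e` and `n`, one has `e n e = c e` and `n e n = c n` with
`c = (vᵀ u')(v'ᵀ u)`, and in characteristic 2 the elements `r = 1 + e`, `s = 1 + n` are
involutions. If `c = 0` then `(rs)² = (sr)²`. Otherwise `t = rs` is a root of the separable
polynomial `(X - 1)(X² + cX + 1)`, whose roots lie in `𝔽_{q²}`, so `t` has odd order `2j + 1`,
and in the dihedral group `⟨r, s⟩` the element `t^j` conjugates `r` to `s`.
-/

open Polynomial Matrix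

theorem pow_mul_eq_mul_pow_of_pow_odd_eq_one {M : Type*} [Monoid M] {r s : M}
    (hr : r * r = 1) (hs : s * s = 1) {j : ℕ} (h : (r * s) ^ (2 * j + 1) = 1) :
    (r * s) ^ j * r = s * (r * s) ^ j := by
  have hinv : s * r * (r * s) = 1 := by rw [mul_assoc, ← mul_assoc r, hr, one_mul, hs]
  have hsemi : SemiconjBy r (s * r) (r * s) := (mul_assoc r s r).symm
  have hpow : (s * r) ^ (j + 1) = (r * s) ^ j :=
    calc (s * r) ^ (j + 1) = (s * r) ^ (j + 1) * (r * s) ^ (2 * j + 1) := by rw [h, mul_one]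
      _ = (s * r) ^ (j + 1) * (r * s) ^ (j + 1) * (r * s) ^ j := by
        rw [mul_assoc, ← pow_add]; ring_nf
      _ = (r * s) ^ j := by rw [pow_mul_pow_eq_one _ hinv, one_mul]
  calc (r * s) ^ j * r = r * (s * r) ^ j := (hsemi.pow_right j).eq.symm
    _ = s * (s * r) ^ (j + 1) := by rw [pow_succ', ← mul_assoc, ← mul_assoc, hs, one_mul]
    _ = s * (r * s) ^ j := by rw [hpow]

theorem two_eq_zero_of_algebra (F : Type*) {A : Type*} [CommSemiring F] [CharP F 2]
    [Semiring A] [Algebra F A] : (2 : A) = 0 := by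
  rw [← map_ofNat (algebraMap F A) 2, CharTwo.two_eq_zero, map_zero]

section CharTwo

variable {F : Type*} [Field F] [Fintype F] [CharP F 2]

theorem X_sq_add_C_mul_X_add_one_dvd {c : F} (hc : c ≠ 0) :
    (X ^ 2 + C c * X + 1 : F[X]) ∣ X ^ Fintype.card F ^ 2 - X := by
  obtain ⟨k, -, hq⟩ := FiniteField.card F 2
  set q := Fintype.card F
  set g : F[X] := X ^ 2 + C c * X + 1
  have hdeg : g.natDegree = 2 := by unfold g; compute_degree!
  have : Nontrivial (AdjoinRoot g) := AdjoinRoot.nontrivial g (by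
    rw [degree_eq_natDegree (by rintro h; simp [h] at hdeg), hdeg]; norm_num)
  have : CharP (AdjoinRoot g) 2 := charP_of_injective_algebraMap (algebraMap F _).injective 2
  have h2 : (2 : AdjoinRoot g) = 0 := CharTwo.two_eq_zero
  set y := AdjoinRoot.root g
  set γ := AdjoinRoot.of g c
  have hroot : ∀ z : AdjoinRoot g, aeval z g = 0 → z ^ 2 + γ * z + 1 = 0 := by
    intro z hz; simpa [g, γ, Algebra.smul_def] using hz
  have hy := hroot y (AdjoinRoot.aeval_eq g ▸ AdjoinRoot.mk_self)
  -- `g(X^q) = g^q` because the coefficients of `g` are fixed by the Frobenius `x ↦ x^q`.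
  have hyq := hroot (y ^ q) (by
    rw [← expand_aeval, FiniteField.expand_card, map_pow, AdjoinRoot.aeval_eq,
      AdjoinRoot.mk_self, zero_pow Fintype.card_ne_zero])
  have hfrob : (y ^ q - y) ^ q = (y ^ q) ^ q - y ^ q := by
    rw [hq]; exact sub_pow_char_pow _ _ _
  set a := y ^ q - y
  -- `(y^q - y)(y^q + y + c) = g(y^q) - g(y) = 0`, and `y^q + y = a` in characteristic 2.
  have ha : a * a = γ * a := by
    linear_combination hyq - hy + (y * (y - y ^ q) - γ * a) * h2
  have hpow : ∀ i, a ^ (i + 1) = γ ^ i * a := by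
    intro i
    induction i with
    | zero => simp
    | succ i ih => rw [pow_succ, ih, mul_assoc, ha, ← mul_assoc, pow_succ]
  have haq : a ^ q = a := by
    have hγ : γ ^ (q - 1) = 1 := by
      rw [← map_pow, FiniteField.pow_card_sub_one_eq_one c hc, map_one]
    calc a ^ q = a ^ (q - 1 + 1) := by rw [Nat.sub_add_cancel Fintype.card_pos]
      _ = a := by rw [hpow, hγ, one_mul]
  rw [← AdjoinRoot.mk_eq_zero]
  simp only [map_sub, map_pow, AdjoinRoot.mk_X]
  rw [sq, pow_mul]
  linear_combination hfrob.symm.trans haq + (y ^ q - y) * h2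

theorem X_sub_one_mul_X_sq_add_C_mul_X_add_one_dvd {c : F} (hc : c ≠ 0) :
    ((X - 1) * (X ^ 2 + C c * X + 1) : F[X]) ∣ X ^ Fintype.card F ^ 2 - X := by
  have hcop : IsCoprime (X - C 1 : F[X]) (X ^ 2 + C c * X + 1) := by
    rw [(irreducible_X_sub_C 1).coprime_iff_not_dvd, dvd_iff_isRoot, IsRoot.def]
    simpa [add_right_comm _ c, CharTwo.add_self_eq_zero] using hc
  rw [← C_1]
  exact hcop.mul_dvd (dvd_iff_isRoot.2 (by simp)) (X_sq_add_C_mul_X_add_one_dvd hc)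

theorem odd_card_sq_sub_one : Odd (Fintype.card F ^ 2 - 1) := by
  obtain ⟨k, -, hq⟩ := FiniteField.card F 2
  refine Nat.Even.sub_odd (Nat.one_le_pow _ _ Fintype.card_pos) ?_ odd_one
  rw [hq, ← pow_mul]
  exact Nat.even_pow.2 ⟨even_two, by positivity⟩

variable {A : Type*} [Ring A] [Algebra F A]

theorem pow_card_sq_eq_self {c : F} (hc : c ≠ 0) {t : A}
    (ht : (t - 1) * (t ^ 2 + c • t + 1) = 0) : t ^ Fintype.card F ^ 2 = t := by
  obtain ⟨g, hg⟩ := X_sub_one_mul_X_sq_add_C_mul_X_add_one_dvd hc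
  have := congrArg (aeval t) hg
  simp only [map_sub, map_mul, map_pow, map_add, map_one, aeval_X, aeval_C,
    ← Algebra.smul_def, ht, zero_mul] at this
  exact sub_eq_zero.1 this

end CharTwo

/-- Models `e = r - 1` and `n = s - 1` for two elements `r`, `s` of the conjugacy class. -/
structure SquareZeroPair {R A : Type*} [CommRing R] [Ring A] [Algebra R A] (c : R) (e n : A) :
    Prop where
  mul_self_left : e * e = 0
  mul_self_right : n * n = 0
  mul_mul_left : e * n * e = c • e
  mul_mul_right : n * e * n = c • n

namespace SquareZeroPair

section Ring

variable {R A : Type*} [CommRing R] [Ring A] [Algebra R A] {c : R} {e n : A}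

theorem symm (h : SquareZeroPair c e n) : SquareZeroPair c n e :=
  ⟨h.mul_self_right, h.mul_self_left, h.mul_mul_right, h.mul_mul_left⟩

theorem mul_self_add (h : SquareZeroPair c e n) :
    (e + n + e * n) * (e + n + e * n) = e * n + n * e + c • (e + n + e * n) := by
  have hn : ∀ y, y * n * n = 0 := fun y => by rw [mul_assoc, h.mul_self_right, mul_zero]
  simp only [add_mul, mul_add, ← mul_assoc, h.mul_self_left, h.mul_self_right, hn,
    h.mul_mul_left, h.mul_mul_right, smul_add, zero_mul, smul_mul_assoc]
  abel

theorem mul_add_mul_add (h : SquareZeroPair c e n) :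
    (e + n + e * n) * (e * n + n * e) = c • (e + n + e * n) := by
  have hn : ∀ y, y * n * n = 0 := fun y => by rw [mul_assoc, h.mul_self_right, mul_zero]
  simp only [add_mul, mul_add, ← mul_assoc, h.mul_self_left, h.mul_self_right, hn,
    h.mul_mul_left, h.mul_mul_right, smul_add, zero_mul, smul_mul_assoc]
  abel

end Ring

section CharTwo

variable {F A : Type*} [CommRing F] [CharP F 2] [Ring A] [Algebra F A] {c : F} {e n : A}

theorem one_add_mul_one_add_self (h : SquareZeroPair c e n) : (1 + e) * (1 + e) = 1 := by
  calc (1 + e) * (1 + e) = 1 + 2 * e + e * e := by noncomm_ring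
    _ = 1 := by rw [two_eq_zero_of_algebra F, h.mul_self_left, zero_mul, add_zero, add_zero]

theorem sq_mul_eq_sq_mul_of_eq_zero (h : SquareZeroPair (0 : F) e n) :
    ((1 + e) * (1 + n)) ^ 2 = ((1 + n) * (1 + e)) ^ 2 := by
  have hsq : ∀ x : A, (1 + x) ^ 2 = 1 + x * x := fun x =>
    calc (1 + x) ^ 2 = 1 + x * x + 2 * x := by noncomm_ring
      _ = 1 + x * x := by rw [two_eq_zero_of_algebra F, zero_mul, add_zero]
  have hrs : (1 + e) * (1 + n) = 1 + (e + n + e * n) := by noncomm_ring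
  have hsr : (1 + n) * (1 + e) = 1 + (n + e + n * e) := by noncomm_ring
  rw [hrs, hsr, hsq, hsq, h.mul_self_add, h.symm.mul_self_add, zero_smul, zero_smul, add_zero,
    add_zero, add_comm (e * n)]

theorem mul_sub_one_mul_eq_zero (h : SquareZeroPair c e n) :
    ((1 + e) * (1 + n) - 1) * (((1 + e) * (1 + n)) ^ 2 + c • ((1 + e) * (1 + n)) + 1) = 0 := by
  have ht : (1 + e) * (1 + n) = 1 + (e + n + e * n) := by noncomm_ring
  have hsq := h.mul_self_add
  have hmul := h.mul_add_mul_add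
  generalize e + n + e * n = x at hsq hmul ht
  have hquad : (1 + x) ^ 2 + c • (1 + x) + 1 = e * n + n * e + c • 1 :=
    calc (1 + x) ^ 2 + c • (1 + x) + 1 = x * x + c • x + c • 1 + 2 * (1 + x) := by
          rw [smul_add]; noncomm_ring
      _ = e * n + n * e + c • 1 + (c + c) • x := by
          rw [hsq, two_eq_zero_of_algebra F, zero_mul, add_zero, add_smul]; abel
      _ = e * n + n * e + c • 1 := by rw [CharTwo.add_self_eq_zero, zero_smul, add_zero]
  rw [ht, add_sub_cancel_left, hquad, mul_add, hmul, mul_smul_comm, mul_one, ← add_smul,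
    CharTwo.add_self_eq_zero, zero_smul]

end CharTwo

section FiniteField

variable {F A : Type*} [Field F] [Fintype F] [CharP F 2] [Ring A] [Algebra F A] {c : F}
  {e n : A}

theorem mul_pow_card_sq_sub_one (h : SquareZeroPair c e n) (hc : c ≠ 0) :
    ((1 + e) * (1 + n)) ^ (Fintype.card F ^ 2 - 1) = 1 := by
  have hinv : (1 + e) * (1 + n) * ((1 + n) * (1 + e)) = 1 := by
    rw [mul_assoc, ← mul_assoc (1 + n), h.symm.one_add_mul_one_add_self, one_mul,
      h.one_add_mul_one_add_self]
  calc ((1 + e) * (1 + n)) ^ (Fintype.card F ^ 2 - 1)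
      = ((1 + e) * (1 + n)) ^ (Fintype.card F ^ 2 - 1) * ((1 + e) * (1 + n)) *
          ((1 + n) * (1 + e)) := by rw [mul_assoc, hinv, mul_one]
    _ = 1 := by
      rw [← pow_succ, Nat.sub_add_cancel (Nat.one_le_pow _ _ Fintype.card_pos),
        pow_card_sq_eq_self hc h.mul_sub_one_mul_eq_zero, hinv]

theorem sq_mul_eq_sq_mul_or_exists_mul_eq_mul (h : SquareZeroPair c e n) :
    ((1 + e) * (1 + n)) ^ 2 = ((1 + n) * (1 + e)) ^ 2 ∨
      ∃ k ∈ Submonoid.closure {1 + e, 1 + n}, k * (1 + e) = (1 + n) * k := by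
  rcases eq_or_ne c 0 with rfl | hc
  · exact Or.inl h.sq_mul_eq_sq_mul_of_eq_zero
  obtain ⟨j, hj⟩ := odd_card_sq_sub_one (F := F)
  refine Or.inr ⟨((1 + e) * (1 + n)) ^ j, ?_, ?_⟩
  · exact pow_mem (mul_mem (Submonoid.subset_closure (Set.mem_insert _ _))
      (Submonoid.subset_closure (Set.mem_insert_of_mem _ (Set.mem_singleton _)))) j
  · refine pow_mul_eq_mul_pow_of_pow_odd_eq_one h.one_add_mul_one_add_self
      h.symm.one_add_mul_one_add_self ?_
    rw [← hj, h.mul_pow_card_sq_sub_one hc]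

end FiniteField

end SquareZeroPair

namespace Matrix

variable {ι R : Type*} [Fintype ι] [CommRing R]

theorem vecMulVec_mul_vecMulVec_eq_smul (u v u' v' : ι → R) :
    vecMulVec u v * vecMulVec u' v' = (v ⬝ᵥ u') • vecMulVec u v' := by
  rw [vecMulVec_mul_vecMulVec, vecMulVec_smul]

theorem squareZeroPair_vecMulVec [DecidableEq ι] {u v u' v' : ι → R} (h : v ⬝ᵥ u = 0)
    (h' : v' ⬝ᵥ u' = 0) :
    SquareZeroPair ((v ⬝ᵥ u') * (v' ⬝ᵥ u)) (vecMulVec u v) (vecMulVec u' v') where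
  mul_self_left := by rw [vecMulVec_mul_vecMulVec_eq_smul, h, zero_smul]
  mul_self_right := by rw [vecMulVec_mul_vecMulVec_eq_smul, h', zero_smul]
  mul_mul_left := by
    rw [vecMulVec_mul_vecMulVec_eq_smul, smul_mul_assoc, vecMulVec_mul_vecMulVec_eq_smul,
      smul_smul]
  mul_mul_right := by
    rw [vecMulVec_mul_vecMulVec_eq_smul, smul_mul_assoc, vecMulVec_mul_vecMulVec_eq_smul,
      smul_smul, mul_comm]

theorem exists_conj_one_add_single_eq [DecidableEq ι] {C : Matrix ι ι R} (hC : IsUnit C.det)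
    {i j : ι} (hij : i ≠ j) :
    ∃ u v : ι → R, v ⬝ᵥ u = 0 ∧ C * (1 + single i j 1) * C⁻¹ = 1 + vecMulVec u v := by
  refine ⟨C *ᵥ Pi.single i 1, Pi.single j 1 ᵥ* C⁻¹, ?_, ?_⟩
  · rw [dotProduct_mulVec, vecMul_vecMul, nonsing_inv_mul C hC, vecMul_one, single_dotProduct,
      one_mul, Pi.single_eq_of_ne' hij]
  · rw [single_eq_single_vecMulVec_single, mul_add, add_mul, mul_one, mul_nonsing_inv C hC,
      mul_vecMulVec, vecMulVec_mul]

end Matrix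

/-- Let `q` be even, `n ≥ 2`, and `O` the conjugacy class in `SL_n(q)` of
`r = I_n + e_{1,n}` (unipotent of type `(2,1,…,1)`).  Then for any `s ∈ O` with
`[r, s] ≠ 1`, either `(rs)² = (sr)²` or the conjugacy classes of `r` and `s`
in `⟨r, s⟩` coincide; consequently `O` is not of type D. -/
theorem stmt13 {F : Type*} [Field F] [Fintype F] [CharP F 2]
    (n : ℕ) (hn : 2 ≤ n) :
    let r : Matrix (Fin n) (Fin n) F :=
      1 + Matrix.single ⟨0, by omega⟩ ⟨n - 1, by omega⟩ 1
    let O : Set (Matrix (Fin n) (Fin n) F) :=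
      {m | ∃ C : Matrix (Fin n) (Fin n) F, C.det = 1 ∧ m = C * r * C⁻¹}
    (∀ s ∈ O, r * s ≠ s * r →
      ((r * s) ^ 2 = (s * r) ^ 2 ∨ ∃ k ∈ Submonoid.closure {r, s}, k * r = s * k)) ∧
    ¬ ∃ r' ∈ O, ∃ s' ∈ O,
        (r' * s') ^ 2 ≠ (s' * r') ^ 2 ∧
        ¬ ∃ k ∈ Submonoid.closure {r', s'}, k * r' = s' * k := by
  intro r O
  have hO : ∀ m ∈ O, ∃ u v : Fin n → F, v ⬝ᵥ u = 0 ∧ m = 1 + vecMulVec u v := by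
    rintro m ⟨C, hC, rfl⟩
    exact exists_conj_one_add_single_eq (hC ▸ isUnit_one) (by simp [Fin.ext_iff]; omega)
  have key : ∀ r' ∈ O, ∀ s' ∈ O, (r' * s') ^ 2 = (s' * r') ^ 2 ∨
      ∃ k ∈ Submonoid.closure {r', s'}, k * r' = s' * k := by
    intro r' hr' s' hs'
    obtain ⟨u, v, huv, rfl⟩ := hO r' hr'
    obtain ⟨u', v', huv', rfl⟩ := hO s' hs'
    exact (squareZeroPair_vecMulVec huv huv').sq_mul_eq_sq_mul_or_exists_mul_eq_mul
  have hr : r ∈ O := ⟨1, det_one, by rw [one_mul, inv_one, mul_one]⟩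
  exact ⟨fun s hs _ => key r hr s hs,
    fun ⟨r', hr', s', hs', hsq, hk⟩ => (key r' hr' s' hs').elim hsq hk⟩
end

section
/- Let q be even and O the conjugacy class in SL_3(q) of unipotent elements of type (2,1) (conjugates of I₃ + e₁₂, with one Jordan block of size 2). Then O is not of type F: there do not exist r₁, r₂, r₃, r₄ ∈ O with pairwise distinct conjugacy classes in ⟨r₁,…,r₄⟩ and pairwise non-commuting. -/
open Matrix Polynomial

set_option linter.unusedSectionVars false

section Helpers

variable {R : Type*} [Ring R]

lemma aux_L1 (r s : R) (hr : r * r = 1) (hs : s * s = 1) :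
    ∀ n : ℕ, (r * s) ^ n * (s * r) ^ n = 1 := by
  intro n
  induction n with
  | zero => simp
  | succ k ih =>
    rw [pow_succ, pow_succ']
    calc (r * s) ^ k * (r * s) * (s * r * (s * r) ^ k)
        = (r * s) ^ k * (r * (s * s) * r) * (s * r) ^ k := by noncomm_ring
      _ = (r * s) ^ k * (s * r) ^ k := by rw [hs, mul_one, hr, mul_one]
      _ = 1 := ih

lemma aux_L2 (r s : R) (n : ℕ) : r * (s * r) ^ n = (r * s) ^ n * r :=
  (SemiconjBy.pow_right (by simp [SemiconjBy, mul_assoc]) n :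
    SemiconjBy r ((s * r) ^ n) ((r * s) ^ n))

lemma conjugator (r s : R) (hr : r * r = 1) (hs : s * s = 1) (j : ℕ)
    (h : (r * s) ^ (2 * j + 1) = 1) :
    ((r * s) ^ j) * r = s * ((r * s) ^ j) := by
  set X := (r * s) ^ j * r with hX
  have hXX : X * X = 1 := by
    calc X * X = ((r * s) ^ j * r) * (r * (s * r) ^ j) := by rw [hX, aux_L2]
      _ = (r * s) ^ j * (r * r) * (s * r) ^ j := by noncomm_ring
      _ = (r * s) ^ j * (s * r) ^ j := by rw [hr, mul_one]
      _ = 1 := aux_L1 r s hr hs j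
  have hXY : X * (s * (r * s) ^ j) = 1 := by
    calc X * (s * (r * s) ^ j) = (r * s) ^ j * (r * s) * (r * s) ^ j := by
          rw [hX]; noncomm_ring
      _ = (r * s) ^ (2 * j + 1) := by
          rw [← pow_succ, ← pow_add]; ring_nf
      _ = 1 := h
  calc (r * s) ^ j * r = X := hX.symm
    _ = X * (X * (s * (r * s) ^ j)) := by rw [hXY, mul_one]
    _ = (X * X) * (s * (r * s) ^ j) := by rw [← mul_assoc]
    _ = s * (r * s) ^ j := by rw [hXX, one_mul]

variable {F : Type*} [Field F]

lemma vmv_mul_vmv (x y z w : Fin 3 → F) :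
    vecMulVec x y * vecMulVec z w = (y ⬝ᵥ z) • vecMulVec x w := by
  ext i j
  simp only [Matrix.mul_apply, vecMulVec_apply, Matrix.smul_apply, dotProduct,
    Finset.sum_mul, smul_eq_mul]
  exact Finset.sum_congr rfl fun k _ => by ring

lemma mul_vmv (C : Matrix (Fin 3) (Fin 3) F) (x y : Fin 3 → F) :
    C * vecMulVec x y = vecMulVec (C *ᵥ x) y := by
  ext i j
  simp only [Matrix.mul_apply, vecMulVec_apply, mulVec, dotProduct, Finset.sum_mul]
  exact Finset.sum_congr rfl fun k _ => by ring

lemma vmv_mul (C : Matrix (Fin 3) (Fin 3) F) (x y : Fin 3 → F) :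
    vecMulVec x y * C = vecMulVec x (y ᵥ* C) := by
  ext i j
  simp only [Matrix.mul_apply, vecMulVec_apply, vecMul, dotProduct, Finset.mul_sum]
  exact Finset.sum_congr rfl fun k _ => by ring

lemma std_eq : (Matrix.single 0 2 1 : Matrix (Fin 3) (Fin 3) F)
    = vecMulVec (Pi.single 0 1) (Pi.single 2 1) := by
  ext i j
  fin_cases i <;> fin_cases j <;>
    simp [Matrix.single, vecMulVec_apply, Pi.single_apply]

lemma decomp {C m : Matrix (Fin 3) (Fin 3) F} (hdet : C.det = 1)
    (hm : m = C * (1 + Matrix.single 0 2 1) * C⁻¹) :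
    ∃ v a : Fin 3 → F, m = 1 + vecMulVec v a ∧ a ⬝ᵥ v = 0 ∧ v ≠ 0 ∧ a ≠ 0 := by
  have hC : IsUnit C.det := by rw [hdet]; exact isUnit_one
  have h1 : C * C⁻¹ = 1 := Matrix.mul_nonsing_inv C hC
  have h2 : C⁻¹ * C = 1 := Matrix.nonsing_inv_mul C hC
  refine ⟨C *ᵥ Pi.single 0 1, Pi.single 2 1 ᵥ* C⁻¹, ?_, ?_, ?_, ?_⟩
  · rw [hm, std_eq, mul_add, mul_one, add_mul, h1, mul_vmv, vmv_mul]
  · rw [Matrix.dotProduct_mulVec, Matrix.vecMul_vecMul, h2]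
    simp [Matrix.vecMul_one]
  · intro h
    have : (Pi.single 0 1 : Fin 3 → F) = 0 := by
      have := congrArg (fun x => C⁻¹ *ᵥ x) h
      simp only [Matrix.mulVec_mulVec, h2, Matrix.one_mulVec, Matrix.mulVec_zero] at this
      exact this
    exact one_ne_zero (congrFun this 0)
  · intro h
    have : (Pi.single 2 1 : Fin 3 → F) = 0 := by
      have := congrArg (fun x => x ᵥ* C) h
      simp only [Matrix.vecMul_vecMul, h2, Matrix.vecMul_one, Matrix.zero_vecMul] at this
      exact this
    exact one_ne_zero (congrFun this 2)

lemma geom (v1 v2 v3 a1 a2 a3 : Fin 3 → F)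
    (h11 : a1 ⬝ᵥ v1 = 0) (h12 : a1 ⬝ᵥ v2 = 0) (h13 : a1 ⬝ᵥ v3 = 0)
    (h22 : a2 ⬝ᵥ v2 = 0) (h23 : a2 ⬝ᵥ v3 = 0) (h33 : a3 ⬝ᵥ v3 = 0)
    (h21 : a2 ⬝ᵥ v1 ≠ 0) (h32 : a3 ⬝ᵥ v2 ≠ 0)
    (hv3 : v3 ≠ 0) (ha1 : a1 ≠ 0) : False := by
  classical
  set V : Matrix (Fin 3) (Fin 3) F := Matrix.of ![v1, v2, v3] with hV
  by_cases hdet : V.det = 0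
  · obtain ⟨c, hc, hcV⟩ := Matrix.exists_vecMul_eq_zero_iff.mpr hdet
    have hz : ∀ n, c 0 * v1 n + c 1 * v2 n + c 2 * v3 n = 0 := by
      intro n
      have := congrFun hcV n
      simpa [Matrix.vecMul, dotProduct, Fin.sum_univ_three, hV] using this
    have hdot : ∀ a : Fin 3 → F,
        c 0 * (a ⬝ᵥ v1) + c 1 * (a ⬝ᵥ v2) + c 2 * (a ⬝ᵥ v3) = 0 := by
      intro a
      simp only [dotProduct, Finset.mul_sum]
      rw [← Finset.sum_add_distrib, ← Finset.sum_add_distrib]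
      rw [show (0:F) = ∑ n : Fin 3, a n * (c 0 * v1 n + c 1 * v2 n + c 2 * v3 n) from by
        simp [hz]]
      exact Finset.sum_congr rfl fun n _ => by ring
    have hc0 : c 0 = 0 := by
      have := hdot a2
      rw [h22, h23] at this
      have h' : c 0 * (a2 ⬝ᵥ v1) = 0 := by simpa using this
      rcases mul_eq_zero.mp h' with h | h
      · exact h
      · exact absurd h h21
    have hc1 : c 1 = 0 := by
      have := hdot a3
      rw [h33, hc0] at this
      have h' : c 1 * (a3 ⬝ᵥ v2) = 0 := by simpa using this
      rcases mul_eq_zero.mp h' with h | h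
      · exact h
      · exact absurd h h32
    have hc2 : c 2 = 0 := by
      have h3 := hz
      have : ∀ n, c 2 * v3 n = 0 := by
        intro n
        have := hz n
        rw [hc0, hc1] at this
        simpa using this
      by_contra hne
      apply hv3
      funext n
      have := this n
      rcases mul_eq_zero.mp this with h | h
      · exact absurd h hne
      · exact h
    exact hc (by funext i; fin_cases i <;> simp [hc0, hc1, hc2])
  · have hunit : IsUnit V := by
      rw [Matrix.isUnit_iff_isUnit_det]
      exact isUnit_iff_ne_zero.mpr hdet
    have hinj := Matrix.mulVec_injective_iff_isUnit.mpr hunit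
    apply ha1
    have e11 : v1 0 * a1 0 + v1 1 * a1 1 + v1 2 * a1 2 = 0 := by
      simpa [dotProduct, Fin.sum_univ_three, mul_comm] using h11
    have e12 : v2 0 * a1 0 + v2 1 * a1 1 + v2 2 * a1 2 = 0 := by
      simpa [dotProduct, Fin.sum_univ_three, mul_comm] using h12
    have e13 : v3 0 * a1 0 + v3 1 * a1 1 + v3 2 * a1 2 = 0 := by
      simpa [dotProduct, Fin.sum_univ_three, mul_comm] using h13
    have : V *ᵥ a1 = V *ᵥ 0 := by
      rw [Matrix.mulVec_zero]
      funext m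
      fin_cases m <;>
        simp [Matrix.mulVec, dotProduct, Fin.sum_univ_three, hV, e11, e12, e13]
    exact hinj this

lemma tournament (P : Fin 4 → Fin 4 → Prop)
    (ht : ∀ i j : Fin 4, i ≠ j → P i j ∨ P j i) :
    ∃ i j k : Fin 4, i ≠ j ∧ i ≠ k ∧ j ≠ k ∧ P i j ∧ P i k ∧ P j k := by
  rcases ht 0 1 (by decide) with e01 | e10
  · rcases ht 0 2 (by decide) with e02 | e20
    · rcases ht 0 3 (by decide) with e03 | e30
      · rcases ht 1 2 (by decide) with e12 | e21
        · rcases ht 1 3 (by decide) with e13 | e31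
          · rcases ht 2 3 (by decide) with e23 | e32
            · exact ⟨0, 1, 2, by decide, by decide, by decide, e01, e02, e12⟩
            · exact ⟨0, 1, 2, by decide, by decide, by decide, e01, e02, e12⟩
          · rcases ht 2 3 (by decide) with e23 | e32
            · exact ⟨0, 1, 2, by decide, by decide, by decide, e01, e02, e12⟩
            · exact ⟨0, 1, 2, by decide, by decide, by decide, e01, e02, e12⟩
        · rcases ht 1 3 (by decide) with e13 | e31
          · rcases ht 2 3 (by decide) with e23 | e32
            · exact ⟨0, 1, 3, by decide, by decide, by decide, e01, e03, e13⟩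
            · exact ⟨0, 1, 3, by decide, by decide, by decide, e01, e03, e13⟩
          · rcases ht 2 3 (by decide) with e23 | e32
            · exact ⟨0, 2, 1, by decide, by decide, by decide, e02, e01, e21⟩
            · exact ⟨0, 2, 1, by decide, by decide, by decide, e02, e01, e21⟩
      · rcases ht 1 2 (by decide) with e12 | e21
        · rcases ht 1 3 (by decide) with e13 | e31
          · rcases ht 2 3 (by decide) with e23 | e32
            · exact ⟨0, 1, 2, by decide, by decide, by decide, e01, e02, e12⟩
            · exact ⟨0, 1, 2, by decide, by decide, by decide, e01, e02, e12⟩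
          · rcases ht 2 3 (by decide) with e23 | e32
            · exact ⟨0, 1, 2, by decide, by decide, by decide, e01, e02, e12⟩
            · exact ⟨0, 1, 2, by decide, by decide, by decide, e01, e02, e12⟩
        · rcases ht 1 3 (by decide) with e13 | e31
          · rcases ht 2 3 (by decide) with e23 | e32
            · exact ⟨0, 2, 1, by decide, by decide, by decide, e02, e01, e21⟩
            · exact ⟨0, 2, 1, by decide, by decide, by decide, e02, e01, e21⟩
          · rcases ht 2 3 (by decide) with e23 | e32
            · exact ⟨0, 2, 1, by decide, by decide, by decide, e02, e01, e21⟩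
            · exact ⟨0, 2, 1, by decide, by decide, by decide, e02, e01, e21⟩
    · rcases ht 0 3 (by decide) with e03 | e30
      · rcases ht 1 2 (by decide) with e12 | e21
        · rcases ht 1 3 (by decide) with e13 | e31
          · rcases ht 2 3 (by decide) with e23 | e32
            · exact ⟨0, 1, 3, by decide, by decide, by decide, e01, e03, e13⟩
            · exact ⟨0, 1, 3, by decide, by decide, by decide, e01, e03, e13⟩
          · rcases ht 2 3 (by decide) with e23 | e32
            · exact ⟨0, 3, 1, by decide, by decide, by decide, e03, e01, e31⟩
            · exact ⟨0, 3, 1, by decide, by decide, by decide, e03, e01, e31⟩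
        · rcases ht 1 3 (by decide) with e13 | e31
          · rcases ht 2 3 (by decide) with e23 | e32
            · exact ⟨0, 1, 3, by decide, by decide, by decide, e01, e03, e13⟩
            · exact ⟨0, 1, 3, by decide, by decide, by decide, e01, e03, e13⟩
          · rcases ht 2 3 (by decide) with e23 | e32
            · exact ⟨0, 3, 1, by decide, by decide, by decide, e03, e01, e31⟩
            · exact ⟨0, 3, 1, by decide, by decide, by decide, e03, e01, e31⟩
      · rcases ht 1 2 (by decide) with e12 | e21
        · rcases ht 1 3 (by decide) with e13 | e31
          · rcases ht 2 3 (by decide) with e23 | e32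
            · exact ⟨1, 2, 3, by decide, by decide, by decide, e12, e13, e23⟩
            · exact ⟨1, 3, 2, by decide, by decide, by decide, e13, e12, e32⟩
          · rcases ht 2 3 (by decide) with e23 | e32
            · exact ⟨2, 3, 0, by decide, by decide, by decide, e23, e20, e30⟩
            · exact ⟨3, 0, 1, by decide, by decide, by decide, e30, e31, e01⟩
        · rcases ht 1 3 (by decide) with e13 | e31
          · rcases ht 2 3 (by decide) with e23 | e32
            · exact ⟨2, 0, 1, by decide, by decide, by decide, e20, e21, e01⟩
            · exact ⟨2, 0, 1, by decide, by decide, by decide, e20, e21, e01⟩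
          · rcases ht 2 3 (by decide) with e23 | e32
            · exact ⟨2, 0, 1, by decide, by decide, by decide, e20, e21, e01⟩
            · exact ⟨2, 0, 1, by decide, by decide, by decide, e20, e21, e01⟩
  · rcases ht 0 2 (by decide) with e02 | e20
    · rcases ht 0 3 (by decide) with e03 | e30
      · rcases ht 1 2 (by decide) with e12 | e21
        · rcases ht 1 3 (by decide) with e13 | e31
          · rcases ht 2 3 (by decide) with e23 | e32
            · exact ⟨0, 2, 3, by decide, by decide, by decide, e02, e03, e23⟩
            · exact ⟨0, 3, 2, by decide, by decide, by decide, e03, e02, e32⟩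
          · rcases ht 2 3 (by decide) with e23 | e32
            · exact ⟨0, 2, 3, by decide, by decide, by decide, e02, e03, e23⟩
            · exact ⟨0, 3, 2, by decide, by decide, by decide, e03, e02, e32⟩
        · rcases ht 1 3 (by decide) with e13 | e31
          · rcases ht 2 3 (by decide) with e23 | e32
            · exact ⟨0, 2, 3, by decide, by decide, by decide, e02, e03, e23⟩
            · exact ⟨0, 3, 2, by decide, by decide, by decide, e03, e02, e32⟩
          · rcases ht 2 3 (by decide) with e23 | e32
            · exact ⟨0, 2, 3, by decide, by decide, by decide, e02, e03, e23⟩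
            · exact ⟨0, 3, 2, by decide, by decide, by decide, e03, e02, e32⟩
      · rcases ht 1 2 (by decide) with e12 | e21
        · rcases ht 1 3 (by decide) with e13 | e31
          · rcases ht 2 3 (by decide) with e23 | e32
            · exact ⟨1, 0, 2, by decide, by decide, by decide, e10, e12, e02⟩
            · exact ⟨1, 0, 2, by decide, by decide, by decide, e10, e12, e02⟩
          · rcases ht 2 3 (by decide) with e23 | e32
            · exact ⟨1, 0, 2, by decide, by decide, by decide, e10, e12, e02⟩
            · exact ⟨1, 0, 2, by decide, by decide, by decide, e10, e12, e02⟩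
        · rcases ht 1 3 (by decide) with e13 | e31
          · rcases ht 2 3 (by decide) with e23 | e32
            · exact ⟨1, 3, 0, by decide, by decide, by decide, e13, e10, e30⟩
            · exact ⟨1, 3, 0, by decide, by decide, by decide, e13, e10, e30⟩
          · rcases ht 2 3 (by decide) with e23 | e32
            · exact ⟨2, 3, 1, by decide, by decide, by decide, e23, e21, e31⟩
            · exact ⟨3, 0, 2, by decide, by decide, by decide, e30, e32, e02⟩
    · rcases ht 0 3 (by decide) with e03 | e30
      · rcases ht 1 2 (by decide) with e12 | e21
        · rcases ht 1 3 (by decide) with e13 | e31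
          · rcases ht 2 3 (by decide) with e23 | e32
            · exact ⟨1, 0, 3, by decide, by decide, by decide, e10, e13, e03⟩
            · exact ⟨1, 0, 3, by decide, by decide, by decide, e10, e13, e03⟩
          · rcases ht 2 3 (by decide) with e23 | e32
            · exact ⟨1, 2, 0, by decide, by decide, by decide, e12, e10, e20⟩
            · exact ⟨1, 2, 0, by decide, by decide, by decide, e12, e10, e20⟩
        · rcases ht 1 3 (by decide) with e13 | e31
          · rcases ht 2 3 (by decide) with e23 | e32
            · exact ⟨1, 0, 3, by decide, by decide, by decide, e10, e13, e03⟩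
            · exact ⟨1, 0, 3, by decide, by decide, by decide, e10, e13, e03⟩
          · rcases ht 2 3 (by decide) with e23 | e32
            · exact ⟨2, 0, 3, by decide, by decide, by decide, e20, e23, e03⟩
            · exact ⟨2, 1, 0, by decide, by decide, by decide, e21, e20, e10⟩
      · rcases ht 1 2 (by decide) with e12 | e21
        · rcases ht 1 3 (by decide) with e13 | e31
          · rcases ht 2 3 (by decide) with e23 | e32
            · exact ⟨1, 2, 0, by decide, by decide, by decide, e12, e10, e20⟩
            · exact ⟨1, 2, 0, by decide, by decide, by decide, e12, e10, e20⟩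
          · rcases ht 2 3 (by decide) with e23 | e32
            · exact ⟨1, 2, 0, by decide, by decide, by decide, e12, e10, e20⟩
            · exact ⟨1, 2, 0, by decide, by decide, by decide, e12, e10, e20⟩
        · rcases ht 1 3 (by decide) with e13 | e31
          · rcases ht 2 3 (by decide) with e23 | e32
            · exact ⟨1, 3, 0, by decide, by decide, by decide, e13, e10, e30⟩
            · exact ⟨1, 3, 0, by decide, by decide, by decide, e13, e10, e30⟩
          · rcases ht 2 3 (by decide) with e23 | e32
            · exact ⟨2, 1, 0, by decide, by decide, by decide, e21, e20, e10⟩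
            · exact ⟨2, 1, 0, by decide, by decide, by decide, e21, e20, e10⟩

variable [CharP F 2]

lemma vmv_mul_vmv2 (x y z w : Fin 3 → F) :
    vecMulVec x y * vecMulVec z w = (y ⬝ᵥ z) • vecMulVec x w := by
  ext i j
  simp only [Matrix.mul_apply, vecMulVec_apply, Matrix.smul_apply, dotProduct,
    Finset.sum_mul, smul_eq_mul]
  exact Finset.sum_congr rfl fun k _ => by ring

lemma madd_self2 (Z : Matrix (Fin 3) (Fin 3) F) : Z + Z = 0 := by
  ext i j
  exact CharTwo.add_self_eq_zero _

lemma invol (v a : Fin 3 → F) (hav : a ⬝ᵥ v = 0) :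
    (1 + vecMulVec v a) * (1 + vecMulVec v a) = 1 := by
  have h := vmv_mul_vmv2 v a v a
  rw [hav, zero_smul] at h
  calc (1 + vecMulVec v a) * (1 + vecMulVec v a)
      = 1 + (vecMulVec v a + vecMulVec v a) + vecMulVec v a * vecMulVec v a := by
        noncomm_ring
    _ = 1 := by rw [madd_self2, h, add_zero, add_zero]

lemma commute_of (v a w b : Fin 3 → F) (haw : a ⬝ᵥ w = 0) (hbv : b ⬝ᵥ v = 0) :
    (1 + vecMulVec v a) * (1 + vecMulVec w b) = (1 + vecMulVec w b) * (1 + vecMulVec v a) := by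
  have h1 := vmv_mul_vmv2 v a w b
  have h2 := vmv_mul_vmv2 w b v a
  rw [haw, zero_smul] at h1
  rw [hbv, zero_smul] at h2
  calc (1 + vecMulVec v a) * (1 + vecMulVec w b)
      = 1 + vecMulVec v a + vecMulVec w b + vecMulVec v a * vecMulVec w b := by noncomm_ring
    _ = 1 + vecMulVec v a + vecMulVec w b + vecMulVec w b * vecMulVec v a := by rw [h1, h2]
    _ = (1 + vecMulVec w b) * (1 + vecMulVec v a) := by noncomm_ring

lemma cube2 (v a w b : Fin 3 → F) (hav : a ⬝ᵥ v = 0) (hbw : b ⬝ᵥ w = 0) :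
    (vecMulVec v a + vecMulVec w b + vecMulVec v a * vecMulVec w b) *
      ((vecMulVec v a + vecMulVec w b + vecMulVec v a * vecMulVec w b) *
       (vecMulVec v a + vecMulVec w b + vecMulVec v a * vecMulVec w b))
    = ((a ⬝ᵥ w) * (b ⬝ᵥ v)) •
        ((vecMulVec v a + vecMulVec w b + vecMulVec v a * vecMulVec w b) *
         (vecMulVec v a + vecMulVec w b + vecMulVec v a * vecMulVec w b))
      + ((a ⬝ᵥ w) * (b ⬝ᵥ v)) •
        (vecMulVec v a + vecMulVec w b + vecMulVec v a * vecMulVec w b) := by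
  simp only [mul_add, add_mul, vmv_mul_vmv2, smul_mul_assoc, mul_smul_comm, smul_smul,
    hav, hbw, zero_smul, add_zero, zero_add, zero_mul, mul_zero, smul_zero, smul_add]
  module

lemma aeval_t (v a w b : Fin 3 → F) (hav : a ⬝ᵥ v = 0) (hbw : b ⬝ᵥ w = 0) :
    aeval ((1 + vecMulVec v a) * (1 + vecMulVec w b))
      ((X + 1) * (X ^ 2 + C ((a ⬝ᵥ w) * (b ⬝ᵥ v)) * X + 1)) = 0 := by
  set A := vecMulVec v a with hA
  set B := vecMulVec w b with hB
  set γ := (a ⬝ᵥ w) * (b ⬝ᵥ v) with hγ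
  set t := (1 + A) * (1 + B) with htdef
  set M := A + B + A * B with hMdef
  have ht : t = 1 + M := by rw [htdef, hMdef]; noncomm_ring
  have h1 : t + 1 = M := by
    rw [ht]
    calc 1 + M + 1 = M + (1 + 1) := by abel
      _ = M := by rw [madd_self2 (1 : Matrix (Fin 3) (Fin 3) F), add_zero]
  have h2 : t * t + γ • t + 1 = M * M + γ • M + γ • 1 := by
    rw [ht]
    have : (1 + M) * (1 + M) = 1 + (M + M) + M * M := by noncomm_ring
    rw [this, madd_self2 M, add_zero, smul_add]
    calc 1 + M * M + (γ • 1 + γ • M) + 1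
        = M * M + γ • M + γ • 1 + (1 + 1) := by abel
      _ = M * M + γ • M + γ • 1 := by rw [madd_self2 (1 : Matrix (Fin 3) (Fin 3) F), add_zero]
  have key : M * (M * M + γ • M + γ • 1) = 0 := by
    rw [mul_add, mul_add, mul_smul_comm, mul_smul_comm, mul_one, cube2 v a w b hav hbw]
    rw [← hA, ← hB, ← hMdef, ← hγ]
    calc γ • (M * M) + γ • M + γ • (M * M) + γ • M
        = (γ • (M * M) + γ • M) + (γ • (M * M) + γ • M) := by abel
      _ = 0 := madd_self2 _
  have : aeval t ((X + 1) * (X ^ 2 + C γ * X + 1))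
      = (t + 1) * (t * t + γ • t + 1) := by
    simp [Algebra.smul_def, sq, mul_assoc]
  rw [this, h1, h2, key]

lemma sep_p {γ : F} (hγ : γ ≠ 0) :
    Squarefree ((X + 1) * (X ^ 2 + C γ * X + 1) : F[X]) := by
  have h2 : (2 : F) = 0 := by
    have := CharP.cast_eq_zero F 2
    exact_mod_cast this
  have h2' : (2 : F[X]) = 0 := by
    rw [← map_ofNat (C : F →+* F[X]) 2, show ((OfNat.ofNat 2 : F)) = 0 from h2, map_zero]
  have hq : (X ^ 2 + C γ * X + 1 : F[X]).Separable := by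
    unfold Polynomial.Separable
    have hd : (X ^ 2 + C γ * X + 1 : F[X]).derivative = C γ := by
      simp [derivative_pow, Nat.cast_ofNat]
      exact h2
    rw [hd]
    exact ⟨0, C γ⁻¹, by simp [hγ, ← C_mul, inv_mul_cancel₀]⟩
  have hlin : (X + 1 : F[X]).Separable := by
    simpa using separable_X_add_C (1 : F)
  have hcop : IsCoprime (X + 1 : F[X]) (X ^ 2 + C γ * X + 1) := by
    refine ⟨C γ⁻¹ * (X + C (γ + 1)), C γ⁻¹, ?_⟩
    have inner : ((X + C (γ + 1)) * (X + 1) + (X ^ 2 + C γ * X + 1) : F[X]) = C γ := by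
      have expand : (C (γ + 1) : F[X]) = C γ + 1 := by rw [map_add, _root_.map_one]
      rw [expand]
      linear_combination (X ^ 2 + (C γ + 1) * X + 1 : F[X]) * h2'
    calc C γ⁻¹ * (X + C (γ + 1)) * (X + 1) + C γ⁻¹ * (X ^ 2 + C γ * X + 1)
        = C γ⁻¹ * ((X + C (γ + 1)) * (X + 1) + (X ^ 2 + C γ * X + 1)) := by ring
      _ = C γ⁻¹ * C γ := by rw [inner]
      _ = 1 := by rw [← C_mul, inv_mul_cancel₀ hγ, C_1]
  exact ((hlin.mul hq) hcop).squarefree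

variable [Fintype F]

lemma madd_self3 (Z : Matrix (Fin 3) (Fin 3) F) : Z + Z = 0 := by
  ext i j
  exact CharTwo.add_self_eq_zero _

lemma odd_order {r s : Matrix (Fin 3) (Fin 3) F} {p : F[X]}
    (hr : r * r = 1) (hs : s * s = 1) (hp : aeval (r * s) p = 0) (hsf : Squarefree p) :
    ∃ j : ℕ, (r * s) ^ (2 * j + 1) = 1 := by
  classical
  set t := r * s with htdef
  have hinv1 : t * (s * r) = 1 := by
    rw [htdef]
    calc r * s * (s * r) = r * (s * s) * r := by noncomm_ring
      _ = 1 := by rw [hs, mul_one, hr]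
  have hinv2 : (s * r) * t = 1 := by
    rw [htdef]
    calc s * r * (r * s) = s * (r * r) * s := by noncomm_ring
      _ = 1 := by rw [hr, mul_one, hs]
  set u : (Matrix (Fin 3) (Fin 3) F)ˣ := ⟨t, s * r, hinv1, hinv2⟩ with hu
  have hn : 0 < orderOf u := orderOf_pos u
  have hpow : u ^ orderOf u = 1 := pow_orderOf_eq_one u
  rcases Nat.even_or_odd (orderOf u) with he | ho
  · exfalso
    obtain ⟨m, hm⟩ := he
    have hm' : orderOf u = 2 * m := by omega
    have hmpos : 0 < m := by omega
    -- x = t^m is an involution in the commutative algebra F[t]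
    have hx2 : t ^ m * t ^ m = 1 := by
      have : (u ^ m) * (u ^ m) = 1 := by
        rw [← pow_add, ← hm, hpow]
      calc t ^ m * t ^ m = ((u ^ m) * (u ^ m) : (Matrix (Fin 3) (Fin 3) F)ˣ) := by
            simp [hu]
        _ = 1 := by rw [this, Units.val_one]
    have haev : aeval t ((X ^ m + 1 : F[X]) ^ 2) = 0 := by
      have : aeval t ((X ^ m + 1 : F[X]) ^ 2) = (t ^ m + 1) * (t ^ m + 1) := by
        simp [sq]
      rw [this]
      calc (t ^ m + 1) * (t ^ m + 1)
          = t ^ m * t ^ m + (t ^ m + t ^ m) + 1 := by noncomm_ring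
        _ = 1 + 0 + 1 := by rw [hx2, madd_self3 (t ^ m)]
        _ = 0 := by rw [add_zero, madd_self3 1]
    have hμp : minpoly F t ∣ p := minpoly.dvd F t hp
    have hμsf : Squarefree (minpoly F t) := Squarefree.squarefree_of_dvd hμp hsf
    have hμg : minpoly F t ∣ (X ^ m + 1 : F[X]) ^ 2 := minpoly.dvd F t haev
    have hμg' : minpoly F t ∣ (X ^ m + 1 : F[X]) :=
      (hμsf.dvd_pow_iff_dvd two_ne_zero).mp hμg
    have hz : aeval t ((X ^ m + 1 : F[X])) = 0 := by
      obtain ⟨c, hc⟩ := hμg'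
      rw [hc, _root_.map_mul, minpoly.aeval, zero_mul]
    have hx1 : t ^ m = 1 := by
      have h1 : t ^ m + 1 = 0 := by simpa using hz
      have := madd_self3 (1 : Matrix (Fin 3) (Fin 3) F)
      calc t ^ m = t ^ m + (1 + 1) := by rw [this, add_zero]
        _ = (t ^ m + 1) + 1 := by abel
        _ = 1 := by rw [h1, zero_add]
    have hum : u ^ m = 1 := Units.ext (by simp [hu, hx1])
    have hdvd : orderOf u ∣ m := orderOf_dvd_of_pow_eq_one hum
    have := Nat.le_of_dvd hmpos hdvd
    omega
  · obtain ⟨j, hj⟩ := ho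
    refine ⟨j, ?_⟩
    have : u ^ (2 * j + 1) = 1 := by rw [← hj, hpow]
    calc t ^ (2 * j + 1) = ((u ^ (2 * j + 1) : (Matrix (Fin 3) (Fin 3) F)ˣ) : Matrix (Fin 3) (Fin 3) F) := by
          simp [hu]
      _ = 1 := by rw [this, Units.val_one]

end Helpers

/-- Let `q` be even and `O` the conjugacy class in `SL_3(q)` of the unipotent
element `I₃ + e₁₃` of type `(2,1)`.  Then `O` is not of type F: there do not
exist `r₁, r₂, r₃, r₄ ∈ O` with pairwise distinct conjugacy classes in the
subgroup `⟨r₁, r₂, r₃, r₄⟩` which pairwise do not commute.  (In characteristic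
`2` every element of `O` is an involution, so the submonoid generated by the
`rₐ` is the subgroup they generate.) -/
theorem stmt16 {F : Type*} [Field F] [Fintype F] [CharP F 2] :
    let r₀ : Matrix (Fin 3) (Fin 3) F := 1 + Matrix.single 0 2 1
    let O : Set (Matrix (Fin 3) (Fin 3) F) :=
      {m | ∃ C : Matrix (Fin 3) (Fin 3) F, C.det = 1 ∧ m = C * r₀ * C⁻¹}
    ¬ ∃ r : Fin 4 → Matrix (Fin 3) (Fin 3) F,
        (∀ a, r a ∈ O) ∧
        (∀ a b, a ≠ b → r a * r b ≠ r b * r a) ∧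
        (∀ a b, a ≠ b →
          ¬ ∃ k ∈ Submonoid.closure (Set.range r), k * r a = r b * k) := by
  intro r₀ O
  rintro ⟨r, hmem, hnc, hncj⟩
  have hdec : ∀ a : Fin 4, ∃ v w : Fin 3 → F,
      r a = 1 + vecMulVec v w ∧ w ⬝ᵥ v = 0 ∧ v ≠ 0 ∧ w ≠ 0 := by
    intro a
    obtain ⟨C, hC, hm⟩ := hmem a
    exact decomp hC hm
  choose v w hra hwv hv hw using hdec
  have hinv : ∀ a : Fin 4, r a * r a = 1 := by
    intro a
    rw [hra a]
    exact invol _ _ (hwv a)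
  set P : Fin 4 → Fin 4 → Prop := fun i j => w i ⬝ᵥ v j = 0 with hP
  have notboth : ∀ i j : Fin 4, i ≠ j → ¬ (P i j ∧ P j i) := by
    rintro i j hij ⟨h1, h2⟩
    apply hnc i j hij
    rw [hra i, hra j]
    exact commute_of _ _ _ _ h1 h2
  have ht : ∀ i j : Fin 4, i ≠ j → P i j ∨ P j i := by
    intro i j hij
    by_contra hcon
    push_neg at hcon
    obtain ⟨h1, h2⟩ := hcon
    have hγ : (w i ⬝ᵥ v j) * (w j ⬝ᵥ v i) ≠ 0 := mul_ne_zero h1 h2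
    have hp : aeval (r i * r j)
        ((X + 1) * (X ^ 2 + C ((w i ⬝ᵥ v j) * (w j ⬝ᵥ v i)) * X + 1)) = 0 := by
      rw [hra i, hra j]
      exact aeval_t _ _ _ _ (hwv i) (hwv j)
    obtain ⟨m, hm⟩ := odd_order (hinv i) (hinv j) hp (sep_p hγ)
    apply hncj i j hij
    refine ⟨(r i * r j) ^ m, ?_, ?_⟩
    · exact pow_mem (mul_mem (Submonoid.subset_closure (Set.mem_range_self i))
        (Submonoid.subset_closure (Set.mem_range_self j))) m
    · exact conjugator (r i) (r j) (hinv i) (hinv j) m hm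
  obtain ⟨i, j, k, hij, hik, hjk, pij, pik, pjk⟩ := tournament P ht
  have h21 : w j ⬝ᵥ v i ≠ 0 := fun h => notboth i j hij ⟨pij, h⟩
  have h32 : w k ⬝ᵥ v j ≠ 0 := fun h => notboth j k hjk ⟨pjk, h⟩
  exact geom (v i) (v j) (v k) (w i) (w j) (w k)
    (hwv i) pij pik (hwv j) pjk (hwv k) h21 h32 (hv k) (hw i)
end
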